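/- arXiv:2411.18333 — 11 statements merged into one kernel-verified Lean document; each statement's English description precedes it below -/
import Mathlib

section
/- Let M be a monoid and K a submonoid of M. Then K is a normal submonoid (i.e. K is the kernel of some monoid homomorphism out of M) if and only if for all k ∈ K and all x, y ∈ M one has x·k·y ∈ K ⟺ x·y ∈ K. -/
universe u

/-- Let `M` be a monoid and `K` a submonoid of `M`.  Then `K` is a normal
submonoid, i.e. `K` is the kernel of some monoid homomorphism out of `M`, if and only if
for all `k ∈ K` and all `x y : M` one has `x * k * y ∈ K ↔ x * y ∈ K`. -/
theorem stmt0 {M : Type u} [Monoid M] (K : Submonoid M) :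
    (∃ (N : Type u) (_ : Monoid N) (f : M →* N), K = MonoidHom.mker f) ↔
      ∀ k ∈ K, ∀ x y : M, x * k * y ∈ K ↔ x * y ∈ K := by
  constructor
  · rintro ⟨N, _, f, rfl⟩ k hk x y
    simp only [MonoidHom.mem_mker] at *
    simp [hk]
  · intro h
    -- the two-sided syntactic congruence of K
    have mul' : ∀ {a b c d : M}, (∀ x y : M, x * a * y ∈ K ↔ x * b * y ∈ K) →
        (∀ x y : M, x * c * y ∈ K ↔ x * d * y ∈ K) →
        ∀ x y : M, x * (a * c) * y ∈ K ↔ x * (b * d) * y ∈ K := by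
      intro a b c d hab hcd x y
      calc x * (a * c) * y ∈ K ↔ x * a * (c * y) ∈ K := by simp [mul_assoc]
        _ ↔ x * b * (c * y) ∈ K := hab x (c * y)
        _ ↔ (x * b) * c * y ∈ K := by simp [mul_assoc]
        _ ↔ (x * b) * d * y ∈ K := hcd (x * b) y
        _ ↔ x * (b * d) * y ∈ K := by simp [mul_assoc]
    set c : Con M := ⟨⟨fun a b => ∀ x y : M, x * a * y ∈ K ↔ x * b * y ∈ K,
        ⟨fun a x y => Iff.rfl, fun hab x y => (hab x y).symm,
          fun hab hbc x y => (hab x y).trans (hbc x y)⟩⟩,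
        fun hab hcd => mul' hab hcd⟩ with hc
    refine ⟨c.Quotient, inferInstance, Con.mk' c, ?_⟩
    ext a
    rw [MonoidHom.mem_mker]
    change _ ↔ (↑a : c.Quotient) = ↑(1 : M)
    rw [Con.eq]
    constructor
    · intro ha
      exact fun x y => (h a ha x y).trans (by rw [mul_one])
    · intro ha
      have := (ha 1 1).mpr (by simpa using K.one_mem)
      simpa using this
end

section
/- Let M be a commutative monoid and K a submonoid of M. Then K is a normal submonoid (i.e. K is the kernel of some monoid homomorphism out of M) if and only if for all k ∈ K and all x ∈ M, x + k ∈ K implies x ∈ K (the converse implication being automatic since K is a submonoid). -/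
universe u

/-- Let `M` be a commutative monoid (written additively) and `K` a
submonoid of `M`.  Then `K` is a normal submonoid, i.e. `K` is the kernel of some monoid
homomorphism out of `M`, if and only if for all `k ∈ K` and all `x : M`, `x + k ∈ K`
implies `x ∈ K` (the converse implication being automatic since `K` is a submonoid). -/
theorem stmt1 {M : Type u} [AddCommMonoid M] (K : AddSubmonoid M) :
    (∃ (N : Type u) (_ : AddMonoid N) (f : M →+ N), K = AddMonoidHom.mker f) ↔
      ∀ k ∈ K, ∀ x : M, x + k ∈ K → x ∈ K := by
  constructor
  · rintro ⟨N, _, f, rfl⟩ k hk x hxk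
    simp only [AddMonoidHom.mem_mker, map_add] at *
    simpa [hk] using hxk
  · intro hsat
    let c : AddCon M :=
      { r := fun x y => ∃ a ∈ K, ∃ b ∈ K, x + a = y + b
        iseqv := by
          refine ⟨fun x => ⟨0, K.zero_mem, 0, K.zero_mem, rfl⟩, ?_, ?_⟩
          · rintro x y ⟨a, ha, b, hb, h⟩
            exact ⟨b, hb, a, ha, h.symm⟩
          · rintro x y z ⟨a, ha, b, hb, h1⟩ ⟨a', ha', b', hb', h2⟩
            refine ⟨a + a', K.add_mem ha ha', b' + b, K.add_mem hb' hb, ?_⟩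
            calc x + (a + a') = (x + a) + a' := (add_assoc _ _ _).symm
              _ = (y + b) + a' := by rw [h1]
              _ = (y + a') + b := by rw [add_right_comm]
              _ = (z + b') + b := by rw [h2]
              _ = z + (b' + b) := add_assoc _ _ _
        add' := by
          rintro w x y z ⟨a, ha, b, hb, h1⟩ ⟨a', ha', b', hb', h2⟩
          refine ⟨a + a', K.add_mem ha ha', b + b', K.add_mem hb hb', ?_⟩
          calc (w + y) + (a + a') = (w + a) + (y + a') := add_add_add_comm _ _ _ _
            _ = (x + b) + (z + b') := by rw [h1, h2]
            _ = (x + z) + (b + b') := (add_add_add_comm _ _ _ _).symm }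
    refine ⟨c.Quotient, inferInstance, c.mk', ?_⟩
    ext x
    rw [AddMonoidHom.mem_mker, show c.mk' x = (x : c.Quotient) from rfl,
      show (0 : c.Quotient) = ((0 : M) : c.Quotient) from rfl, AddCon.eq]
    constructor
    · intro hx
      exact ⟨0, K.zero_mem, x, hx, by rw [add_zero, zero_add]⟩
    · rintro ⟨a, ha, b, hb, h⟩
      exact hsat a ha x (by rw [h, zero_add]; exact hb)
end

section
/- Let X be a z-exact category, A an object of X, and y : Y ↣ A, z : Z ↣ A two normal monomorphisms. Then the pullback of y and z exists (it is the kernel of the composite Y ↣ A ↠ A/Z), the resulting monomorphism into A is a normal monomorphism, and the subobject of A it represents is the greatest lower bound of the subobjects represented by y and z in the poset of normal subobjects of A. -/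
open CategoryTheory CategoryTheory.Limits

universe v u

variable {C : Type u} [Category.{v} C]

/-- A morphism is a *normal monomorphism* if it is a kernel of some morphism. -/
def IsNormalMonoMap [HasZeroMorphisms C] {X Y : C} (f : X ⟶ Y) : Prop :=
  Nonempty (NormalMono f)

/-- A morphism is a *normal epimorphism* if it is a cokernel of some morphism. -/
def IsNormalEpiMap [HasZeroMorphisms C] {X Y : C} (f : X ⟶ Y) : Prop :=
  Nonempty (NormalEpi f)

/-- A morphism is *normal* if it factors as a normal epimorphism followed by a
normal monomorphism. -/
def IsNormalMap [HasZeroMorphisms C] {X Y : C} (f : X ⟶ Y) : Prop :=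
  ∃ (I : C) (e : X ⟶ I) (m : I ⟶ Y), IsNormalEpiMap e ∧ IsNormalMonoMap m ∧ e ≫ m = f

/-- A morphism is *antinormal* if it factors as a normal monomorphism followed by a
normal epimorphism. -/
def IsAntinormalMap [HasZeroMorphisms C] {X Y : C} (f : X ⟶ Y) : Prop :=
  ∃ (I : C) (m : X ⟶ I) (e : I ⟶ Y), IsNormalMonoMap m ∧ IsNormalEpiMap e ∧ m ≫ e = f

variable (C) in
/-- A z-exact category is *di-exact* if every antinormal morphism is normal. -/
def IsDiExact [HasZeroMorphisms C] : Prop :=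
  ∀ ⦃X Y : C⦄ (f : X ⟶ Y), IsAntinormalMap f → IsNormalMap f

variable (C) in
/-- A z-exact category is *homologically self-dual* if for every totally normal sequence of
monomorphisms `f : X ⟶ Y`, `g : Y ⟶ Z`, the induced morphism `Y/X ⟶ Z/X` between the
cokernels is a normal monomorphism. -/
def IsHomologicallySelfDual [HasZeroMorphisms C] : Prop :=
  ∀ ⦃X Y Z QY QZ : C⦄ (f : X ⟶ Y) (g : Y ⟶ Z),
    IsNormalMonoMap f → IsNormalMonoMap g → IsNormalMonoMap (f ≫ g) →
    ∀ (p : Y ⟶ QY) (wp : f ≫ p = 0), IsColimit (CokernelCofork.ofπ p wp) →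
    ∀ (q : Z ⟶ QZ) (wq : (f ≫ g) ≫ q = 0), IsColimit (CokernelCofork.ofπ q wq) →
    ∀ (u : QY ⟶ QZ), p ≫ u = g ≫ q → IsNormalMonoMap u

/-- The poset of normal subobjects of an object. -/
abbrev NormalSubobject [HasZeroMorphisms C] (A : C) : Type (max u v) :=
  {P : Subobject A // Nonempty (NormalMono P.arrow)}

/-- Modularity of the poset of normal subobjects, expressed via `IsLUB`/`IsGLB`. -/
def NormalSubobjectsModular [HasZeroMorphisms C] (A : C) : Prop :=
  ∀ P Q R S T U V : NormalSubobject A, R ≤ P →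
    IsLUB {Q, R} S → IsGLB {P, S} T → IsGLB {P, Q} U → IsLUB {U, R} V → T = V

/-- Distributivity of the poset of normal subobjects, expressed via `IsLUB`/`IsGLB`. -/
def NormalSubobjectsDistrib [HasZeroMorphisms C] (A : C) : Prop :=
  ∀ P Q R S T U V W : NormalSubobject A,
    IsLUB {Q, R} S → IsGLB {P, S} T → IsGLB {P, Q} U → IsGLB {P, R} V →
    IsLUB {U, V} W → T = W

/-- In a z-exact category, the pullback of two normal monomorphisms
`y : Y ↣ A` and `z : Z ↣ A` exists (it is the kernel of the composite `Y ↣ A ↠ A/Z`),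
the diagonal of the pullback square is a normal monomorphism, and it represents the
greatest lower bound of the two normal subobjects in the poset of normal subobjects
of `A`. -/
theorem stmt6 {C : Type u} [Category.{v} C] [HasZeroObject C] [HasZeroMorphisms C]
    [HasKernels C] [HasCokernels C] {A Y Z : C} (y : Y ⟶ A) (z : Z ⟶ A)
    (hy : IsNormalMonoMap y) (hz : IsNormalMonoMap z) :
    ∃ (W : C) (p : W ⟶ Y) (q : W ⟶ Z),
      IsPullback p q y z ∧
      (∃ w : p ≫ (y ≫ cokernel.π z) = 0, Nonempty (IsLimit (KernelFork.ofι p w))) ∧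
      IsNormalMonoMap (p ≫ y) ∧
      ∀ (T : C) (t : T ⟶ A), IsNormalMonoMap t →
        (((∃ u : T ⟶ Y, u ≫ y = t) ∧ (∃ v : T ⟶ Z, v ≫ z = t)) ↔
          ∃ w : T ⟶ W, w ≫ (p ≫ y) = t) := by
  obtain ⟨ny⟩ := hy
  obtain ⟨nz⟩ := hz
  have my : Mono y := mono_of_isLimit_fork ny.isLimit
  have mz : Mono z := mono_of_isLimit_fork nz.isLimit
  -- anything killed by `cokernel.π z` factors through `z`
  have factz : ∀ {T : C} (t : T ⟶ A), t ≫ cokernel.π z = 0 → ∃ v : T ⟶ Z, v ≫ z = t := by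
    intro T t ht
    have hg : t ≫ nz.g = 0 := by
      rw [← cokernel.π_desc z nz.g nz.w, ← Category.assoc, ht, zero_comp]
    obtain ⟨v, hv⟩ := KernelFork.IsLimit.lift' nz.isLimit t hg
    exact ⟨v, hv⟩
  -- anything killed by `ny.g` factors through `y`
  have facty : ∀ {T : C} (t : T ⟶ A), t ≫ ny.g = 0 → ∃ u : T ⟶ Y, u ≫ y = t := by
    intro T t ht
    obtain ⟨u, hu⟩ := KernelFork.IsLimit.lift' ny.isLimit t ht
    exact ⟨u, hu⟩
  obtain ⟨q, hq⟩ := factz (kernel.ι (y ≫ cokernel.π z) ≫ y)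
    (by rw [Category.assoc]; exact kernel.condition _)
  refine ⟨kernel (y ≫ cokernel.π z), kernel.ι _, q, ?_, ⟨kernel.condition _, ⟨kernelIsKernel _⟩⟩,
    ?_, ?_⟩
  · -- pullback
    refine IsPullback.of_isLimit (c := PullbackCone.mk _ _ hq.symm) ?_
    refine PullbackCone.IsLimit.mk hq.symm
      (fun s => kernel.lift _ s.fst (by
        rw [← Category.assoc, s.condition, Category.assoc, cokernel.condition, comp_zero]))
      (fun s => kernel.lift_ι _ _ _) (fun s => ?_) (fun s m hm1 hm2 => ?_)
    · rw [← cancel_mono z, Category.assoc, hq, ← Category.assoc, kernel.lift_ι, s.condition]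
    · apply (cancel_mono (kernel.ι (y ≫ cokernel.π z))).1
      rw [kernel.lift_ι]; exact hm1
  · -- normality of the intersection
    have key : ∀ {T : C} (t : T ⟶ A),
        t ≫ cokernel.π (kernel.ι (y ≫ cokernel.π z) ≫ y) = 0 →
        ∃ l, l ≫ kernel.ι (y ≫ cokernel.π z) ≫ y = t := by
      intro T t ht
      have h1 : t ≫ ny.g = 0 := by
        have w1 : (kernel.ι (y ≫ cokernel.π z) ≫ y) ≫ ny.g = 0 := by
          rw [Category.assoc, ny.w, comp_zero]
        rw [← cokernel.π_desc _ ny.g w1, ← Category.assoc, ht, zero_comp]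
      have h2 : t ≫ cokernel.π z = 0 := by
        have w2 : (kernel.ι (y ≫ cokernel.π z) ≫ y) ≫ cokernel.π z = 0 := by
          rw [Category.assoc]; exact kernel.condition _
        rw [← cokernel.π_desc _ (cokernel.π z) w2, ← Category.assoc, ht, zero_comp]
      obtain ⟨u, hu⟩ := facty t h1
      have hu2 : u ≫ y ≫ cokernel.π z = 0 := by rw [← Category.assoc, hu, h2]
      exact ⟨kernel.lift _ u hu2, by rw [← Category.assoc, kernel.lift_ι, hu]⟩
    have mm : Mono (kernel.ι (y ≫ cokernel.π z) ≫ y) := mono_comp _ _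
    refine ⟨⟨_, cokernel.π _, cokernel.condition _, ?_⟩⟩
    exact KernelFork.IsLimit.ofι' _ _ (fun k hk =>
      ⟨(key k hk).choose, (key k hk).choose_spec⟩)
  · -- glb property
    intro T t _
    constructor
    · rintro ⟨⟨u, hu⟩, ⟨v, hv⟩⟩
      have h0 : u ≫ y ≫ cokernel.π z = 0 := by
        rw [← Category.assoc, hu, ← hv, Category.assoc, cokernel.condition, comp_zero]
      exact ⟨kernel.lift _ u h0, by rw [← Category.assoc, kernel.lift_ι, hu]⟩
    · rintro ⟨w, hw⟩
      exact ⟨⟨w ≫ kernel.ι _, by rw [Category.assoc]; exact hw⟩,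
        ⟨w ≫ q, by rw [Category.assoc, hq]; exact hw⟩⟩
end

section
/- Let X be a z-exact category, A an object of X, and y : Y ↣ A, z : Z ↣ A two normal monomorphisms. Let q : A ↠ Q be the cokernel of the composite Y ↣ A ↠ A/Z, and let k : K ↣ A be the kernel of q. Then k is a normal monomorphism through which both y and z factor, and for every normal monomorphism t : T ↣ A through which both y and z factor, k factors through t; that is, K represents the least upper bound of the subobjects represented by y and z in the poset of normal subobjects of A. -/
open CategoryTheory CategoryTheory.Limits

universe v u

variable {C : Type u} [Category.{v} C]

/-- In a z-exact category, given normal monomorphisms `y : Y ↣ A` and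
`z : Z ↣ A`, let `q : A ↠ Q` be the cokernel of the composite `Y ↣ A ↠ A/Z` (i.e.
`q = cokernel.π z ≫ cokernel.π (y ≫ cokernel.π z)`) and let `k = kernel.ι q : K ↣ A`.
Then `k` is a normal monomorphism through which both `y` and `z` factor, and `k` factors
through every normal monomorphism `t : T ↣ A` through which both `y` and `z` factor;
that is, `K` represents the least upper bound of `y` and `z` in the poset of normal
subobjects of `A`. -/
theorem stmt7 {C : Type u} [Category.{v} C] [HasZeroObject C] [HasZeroMorphisms C]
    [HasKernels C] [HasCokernels C] {A Y Z : C} (y : Y ⟶ A) (z : Z ⟶ A)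
    (hy : IsNormalMonoMap y) (hz : IsNormalMonoMap z) :
    IsNormalMonoMap (kernel.ι (cokernel.π z ≫ cokernel.π (y ≫ cokernel.π z))) ∧
    (∃ u : Y ⟶ kernel (cokernel.π z ≫ cokernel.π (y ≫ cokernel.π z)),
      u ≫ kernel.ι (cokernel.π z ≫ cokernel.π (y ≫ cokernel.π z)) = y) ∧
    (∃ v : Z ⟶ kernel (cokernel.π z ≫ cokernel.π (y ≫ cokernel.π z)),
      v ≫ kernel.ι (cokernel.π z ≫ cokernel.π (y ≫ cokernel.π z)) = z) ∧
    ∀ (T : C) (t : T ⟶ A), IsNormalMonoMap t →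
      (∃ u : Y ⟶ T, u ≫ t = y) → (∃ v : Z ⟶ T, v ≫ t = z) →
      ∃ w : kernel (cokernel.π z ≫ cokernel.π (y ≫ cokernel.π z)) ⟶ T,
        w ≫ t = kernel.ι (cokernel.π z ≫ cokernel.π (y ≫ cokernel.π z)) := by
  set q := cokernel.π z ≫ cokernel.π (y ≫ cokernel.π z) with hq
  have hyq : y ≫ q = 0 := by
    rw [hq, ← Category.assoc, cokernel.condition]
  have hzq : z ≫ q = 0 := by
    rw [hq, ← Category.assoc, cokernel.condition, zero_comp]
  refine ⟨⟨{ Z := _, g := q, w := kernel.condition q, isLimit := kernelIsKernel q }⟩, ⟨kernel.lift q y hyq, kernel.lift_ι _ _ _⟩,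
    ⟨kernel.lift q z hzq, kernel.lift_ι _ _ _⟩, ?_⟩
  rintro T t ⟨ht⟩ ⟨u, hu⟩ ⟨v, hv⟩
  -- t is a kernel of ht.g; y and z kill ht.g, so q factors ht.g
  have hyg : y ≫ ht.g = 0 := by rw [← hu, Category.assoc, ht.w, comp_zero]
  have hzg : z ≫ ht.g = 0 := by rw [← hv, Category.assoc, ht.w, comp_zero]
  obtain ⟨g', hg'⟩ : ∃ g', cokernel.π z ≫ g' = ht.g :=
    ⟨cokernel.desc z ht.g hzg, cokernel.π_desc _ _ _⟩
  have hyg' : (y ≫ cokernel.π z) ≫ g' = 0 := by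
    rw [Category.assoc, hg', hyg]
  obtain ⟨g'', hg''⟩ : ∃ g'', cokernel.π (y ≫ cokernel.π z) ≫ g'' = g' :=
    ⟨cokernel.desc _ g' hyg', cokernel.π_desc _ _ _⟩
  have h0 : (kernel.ι q ≫ cokernel.π z) ≫ cokernel.π (y ≫ cokernel.π z) = 0 := by
    rw [Category.assoc, ← hq]; exact kernel.condition q
  have hkg : kernel.ι q ≫ ht.g = 0 := by
    rw [← hg', ← hg'', ← Category.assoc, ← Category.assoc, h0, zero_comp]
  obtain ⟨w, hw⟩ := KernelFork.IsLimit.lift' ht.isLimit (kernel.ι q) hkg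
  exact ⟨w, hw⟩
end

section
/- Let X be a z-exact category and A an object of X. Then the poset nsub(A) of normal subobjects of A is a lattice, whose meet of two normal subobjects is represented by their pullback, whose join of two normal subobjects Y, Z is represented by the kernel of the cokernel of the morphism Y → A/Z, whose greatest element is A (represented by the identity) and whose least element is the zero subobject. -/
open CategoryTheory CategoryTheory.Limits

universe v u

variable {C : Type u} [Category.{v} C]

namespace Stmt8Aux

variable {C : Type u} [Category.{v} C] [HasZeroMorphisms C]

/-- A normal mono factors any morphism killed by its cokernel. -/
lemma factor_of_normal [HasCokernels C] {X A V : C} {f : X ⟶ A} (n : NormalMono f)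
    (h : V ⟶ A) (hw : h ≫ cokernel.π f = 0) : ∃ l : V ⟶ X, l ≫ f = h := by
  have hg : h ≫ n.g = 0 := by
    have : n.g = cokernel.π f ≫ cokernel.desc f n.g n.w := (cokernel.π_desc _ _ _).symm
    rw [this, ← Category.assoc, hw, zero_comp]
  exact ⟨(KernelFork.IsLimit.lift' n.isLimit h hg).1,
    (KernelFork.IsLimit.lift' n.isLimit h hg).2⟩

/-- Normality transfers to the arrow of the subobject represented by a normal mono. -/
lemma normalMono_mk {X A : C} (f : X ⟶ A) [Mono f] (n : NormalMono f) :
    Nonempty (NormalMono ((Subobject.mk f).arrow)) := by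
  refine ⟨{ Z := n.Z, g := n.g, w := ?_, isLimit := ?_ }⟩
  · rw [← Subobject.underlyingIso_hom_comp_eq_mk, Category.assoc, n.w, comp_zero]
  · refine KernelFork.IsLimit.ofι _ _
      (fun g' hg' => (KernelFork.IsLimit.lift' n.isLimit g' hg').1 ≫ (Subobject.underlyingIso f).inv)
      (fun g' hg' => ?_) (fun g' hg' m hm => ?_)
    · rw [Category.assoc, Subobject.underlyingIso_arrow]
      exact (KernelFork.IsLimit.lift' n.isLimit g' hg').2
    · rw [← cancel_mono ((Subobject.mk f).arrow), hm, Category.assoc,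
        Subobject.underlyingIso_arrow]
      exact ((KernelFork.IsLimit.lift' n.isLimit g' hg').2).symm

lemma isGLB_pair {α : Type*} [Preorder α] {a b c : α}
    (h1 : c ≤ a) (h2 : c ≤ b) (h3 : ∀ d, d ≤ a → d ≤ b → d ≤ c) : IsGLB {a, b} c := by
  constructor
  · rintro x (rfl | rfl)
    exacts [h1, h2]
  · intro d hd
    exact h3 d (hd (Set.mem_insert _ _)) (hd (Set.mem_insert_of_mem _ rfl))

lemma isLUB_pair {α : Type*} [Preorder α] {a b c : α}
    (h1 : a ≤ c) (h2 : b ≤ c) (h3 : ∀ d, a ≤ d → b ≤ d → c ≤ d) : IsLUB {a, b} c := by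
  constructor
  · rintro x (rfl | rfl)
    exacts [h1, h2]
  · intro d hd
    exact h3 d (hd (Set.mem_insert _ _)) (hd (Set.mem_insert_of_mem _ rfl))

end Stmt8Aux

/-- In a z-exact category, the poset of normal subobjects of an object `A`
is a lattice: every pair of normal subobjects has a greatest lower bound, represented by
their pullback, and a least upper bound, represented by the kernel of the cokernel of the
morphism `Y ⟶ A/Z`; the greatest element is `A` itself (represented by the identity) and
the least element is the zero subobject (represented by a normal monomorphism with zero
arrow). -/
theorem stmt8 {C : Type u} [Category.{v} C] [HasZeroObject C] [HasZeroMorphisms C]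
    [HasKernels C] [HasCokernels C] (A : C) :
    (∀ P Q : NormalSubobject A, ∃ R : NormalSubobject A, IsGLB {P, Q} R ∧
      ∃ (W : C) (p : W ⟶ (P.1 : C)) (q : W ⟶ (Q.1 : C))
        (_ : IsPullback p q P.1.arrow Q.1.arrow) (hm : Mono (p ≫ P.1.arrow)),
        R.1 = @Subobject.mk _ _ _ _ (p ≫ P.1.arrow) hm) ∧
    (∀ P Q : NormalSubobject A, ∃ R : NormalSubobject A, IsLUB {P, Q} R ∧
      R.1 = Subobject.mk (kernel.ι (cokernel.π Q.1.arrow ≫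
        cokernel.π (P.1.arrow ≫ cokernel.π Q.1.arrow)))) ∧
    (∃ Tp : NormalSubobject A, IsTop Tp ∧ Tp.1 = Subobject.mk (𝟙 A)) ∧
    (∃ Bt : NormalSubobject A, IsBot Bt ∧ Bt.1.arrow = 0) := by
  refine ⟨?_, ?_, ?_, ?_⟩
  · -- meets
    intro P Q
    obtain ⟨nP⟩ := P.2
    obtain ⟨nQ⟩ := Q.2
    set p : kernel (P.1.arrow ≫ cokernel.π Q.1.arrow) ⟶ (P.1 : C) :=
      kernel.ι (P.1.arrow ≫ cokernel.π Q.1.arrow) with hp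
    have hm0 : (p ≫ P.1.arrow) ≫ cokernel.π Q.1.arrow = 0 := by
      rw [Category.assoc, hp]; exact kernel.condition _
    obtain ⟨qm, hqm⟩ := Stmt8Aux.factor_of_normal nQ (p ≫ P.1.arrow) hm0
    haveI hmono : Mono (p ≫ P.1.arrow) := mono_comp _ _
    have key : ∀ {V : C} (h : V ⟶ A), h ≫ cokernel.π (p ≫ P.1.arrow) = 0 →
        ∃ l, l ≫ (p ≫ P.1.arrow) = h := by
      intro V h hw
      have hP : h ≫ cokernel.π P.1.arrow = 0 := by
        have w1 : (p ≫ P.1.arrow) ≫ cokernel.π P.1.arrow = 0 := by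
          rw [Category.assoc, cokernel.condition, comp_zero]
        have : cokernel.π P.1.arrow = cokernel.π (p ≫ P.1.arrow) ≫ cokernel.desc _ _ w1 :=
          (cokernel.π_desc _ _ _).symm
        rw [this, ← Category.assoc, hw, zero_comp]
      obtain ⟨a, ha⟩ := Stmt8Aux.factor_of_normal nP h hP
      have hQ : h ≫ cokernel.π Q.1.arrow = 0 := by
        have : cokernel.π Q.1.arrow = cokernel.π (p ≫ P.1.arrow) ≫ cokernel.desc _ _ hm0 :=
          (cokernel.π_desc _ _ _).symm
        rw [this, ← Category.assoc, hw, zero_comp]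
      have ha2 : a ≫ (P.1.arrow ≫ cokernel.π Q.1.arrow) = 0 := by
        rw [← Category.assoc, ha, hQ]
      refine ⟨kernel.lift _ a ha2, ?_⟩
      rw [← Category.assoc, hp, kernel.lift_ι, ha]
    have nm : NormalMono (p ≫ P.1.arrow) :=
      { Z := _
        g := cokernel.π (p ≫ P.1.arrow)
        w := cokernel.condition _
        isLimit := KernelFork.IsLimit.ofι _ _
          (fun h hw => (key h hw).choose)
          (fun h hw => (key h hw).choose_spec)
          (fun h hw l hl => by
            rw [← cancel_mono (p ≫ P.1.arrow), hl, (key h hw).choose_spec]) }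
    refine ⟨⟨Subobject.mk (p ≫ P.1.arrow), Stmt8Aux.normalMono_mk _ nm⟩, ?_, ?_⟩
    · apply Stmt8Aux.isGLB_pair
      · show Subobject.mk (p ≫ P.1.arrow) ≤ P.1
        have := Subobject.mk_le_mk_of_comm p (rfl : p ≫ P.1.arrow = p ≫ P.1.arrow)
        rwa [Subobject.mk_arrow] at this
      · show Subobject.mk (p ≫ P.1.arrow) ≤ Q.1
        have := Subobject.mk_le_mk_of_comm qm hqm
        rwa [Subobject.mk_arrow] at this
      · intro T hTP hTQ
        have h1 : T.1 ≤ P.1 := hTP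
        have h2 : T.1 ≤ Q.1 := hTQ
        have hTq : T.1.arrow ≫ cokernel.π Q.1.arrow = 0 := by
          rw [← Subobject.ofLE_arrow h2, Category.assoc, cokernel.condition, comp_zero]
        have hfq : Subobject.ofLE _ _ h1 ≫ (P.1.arrow ≫ cokernel.π Q.1.arrow) = 0 := by
          rw [← Category.assoc, Subobject.ofLE_arrow, hTq]
        show T.1 ≤ Subobject.mk (p ≫ P.1.arrow)
        refine Subobject.le_mk_of_comm (kernel.lift _ _ hfq) ?_
        rw [← Category.assoc, hp, kernel.lift_ι, Subobject.ofLE_arrow]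
    · refine ⟨kernel (P.1.arrow ≫ cokernel.π Q.1.arrow), p, qm, ?_, hmono, rfl⟩
      refine IsPullback.of_isLimit (PullbackCone.IsLimit.mk hqm.symm
        (fun s => kernel.lift _ s.fst ?_) (fun s => ?_) (fun s => ?_) (fun s m hl hr => ?_))
      · rw [← Category.assoc, s.condition, Category.assoc, cokernel.condition, comp_zero]
      · rw [hp]; exact kernel.lift_ι _ _ _
      · rw [← cancel_mono Q.1.arrow, Category.assoc, hqm, ← Category.assoc, hp,
          kernel.lift_ι, s.condition]
      · rw [← cancel_mono p, hl, hp, kernel.lift_ι]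
  · -- joins
    intro P Q
    set s : A ⟶ cokernel (P.1.arrow ≫ cokernel.π Q.1.arrow) :=
      cokernel.π Q.1.arrow ≫ cokernel.π (P.1.arrow ≫ cokernel.π Q.1.arrow) with hs
    have nk : NormalMono (kernel.ι s) :=
      { Z := _, g := s, w := kernel.condition s, isLimit := kernelIsKernel s }
    refine ⟨⟨Subobject.mk (kernel.ι s), Stmt8Aux.normalMono_mk _ nk⟩, ?_, rfl⟩
    apply Stmt8Aux.isLUB_pair
    · show P.1 ≤ Subobject.mk (kernel.ι s)
      have hP : P.1.arrow ≫ s = 0 := by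
        rw [hs, ← Category.assoc]; exact cokernel.condition _
      exact Subobject.le_mk_of_comm (kernel.lift s P.1.arrow hP) (kernel.lift_ι _ _ _)
    · show Q.1 ≤ Subobject.mk (kernel.ι s)
      have hQ : Q.1.arrow ≫ s = 0 := by
        rw [hs, ← Category.assoc, cokernel.condition, zero_comp]
      exact Subobject.le_mk_of_comm (kernel.lift s Q.1.arrow hQ) (kernel.lift_ι _ _ _)
    · intro T h1 h2
      obtain ⟨nT⟩ := T.2
      have h1' : P.1 ≤ T.1 := h1
      have h2' : Q.1 ≤ T.1 := h2
      have ht1 : Q.1.arrow ≫ cokernel.π T.1.arrow = 0 := by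
        rw [← Subobject.ofLE_arrow h2', Category.assoc, cokernel.condition, comp_zero]
      have ht2 : P.1.arrow ≫ cokernel.π T.1.arrow = 0 := by
        rw [← Subobject.ofLE_arrow h1', Category.assoc, cokernel.condition, comp_zero]
      have hu : cokernel.π Q.1.arrow ≫ cokernel.desc Q.1.arrow (cokernel.π T.1.arrow) ht1 =
          cokernel.π T.1.arrow := cokernel.π_desc _ _ _
      have ht3 : (P.1.arrow ≫ cokernel.π Q.1.arrow) ≫
          cokernel.desc Q.1.arrow (cokernel.π T.1.arrow) ht1 = 0 := by
        rw [Category.assoc, hu, ht2]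
      have hv : cokernel.π (P.1.arrow ≫ cokernel.π Q.1.arrow) ≫ cokernel.desc _ _ ht3 =
          cokernel.desc Q.1.arrow (cokernel.π T.1.arrow) ht1 := cokernel.π_desc _ _ _
      have hsv : s ≫ cokernel.desc _ _ ht3 = cokernel.π T.1.arrow := by
        rw [hs, Category.assoc, hv, hu]
      have hkt : kernel.ι s ≫ cokernel.π T.1.arrow = 0 := by
        rw [← hsv, ← Category.assoc, kernel.condition, zero_comp]
      obtain ⟨l, hl⟩ := Stmt8Aux.factor_of_normal nT _ hkt
      show Subobject.mk (kernel.ι s) ≤ T.1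
      exact Subobject.mk_le_of_comm l hl
  · -- top
    obtain ⟨Z0, hZ0⟩ := HasZeroObject.zero (C := C)
    have nid : NormalMono (𝟙 A) :=
      { Z := Z0
        g := 0
        w := by simp
        isLimit := KernelFork.IsLimit.ofι _ _ (fun g' _ => g')
          (fun g' _ => Category.comp_id g') (fun g' _ m hm => by simpa using hm) }
    refine ⟨⟨Subobject.mk (𝟙 A), Stmt8Aux.normalMono_mk _ nid⟩, ?_, rfl⟩
    intro T
    show T.1 ≤ Subobject.mk (𝟙 A)
    exact Subobject.le_mk_of_comm T.1.arrow (Category.comp_id _)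
  · -- bottom
    obtain ⟨Z0, hZ0⟩ := HasZeroObject.zero (C := C)
    haveI : Mono (0 : Z0 ⟶ A) := ⟨fun g h _ => hZ0.eq_of_tgt g h⟩
    have harrow : (Subobject.mk (0 : Z0 ⟶ A)).arrow = 0 := by
      rw [← Subobject.underlyingIso_hom_comp_eq_mk, comp_zero]
    have nb : NormalMono ((Subobject.mk (0 : Z0 ⟶ A)).arrow) :=
      { Z := A
        g := 𝟙 A
        w := by rw [Category.comp_id, harrow]
        isLimit := KernelFork.IsLimit.ofι _ _ (fun g' _ => 0)
          (fun g' hg' => by rw [zero_comp, ← hg', Category.comp_id])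
          (fun g' hg' m hm =>
            (hZ0.of_iso (Subobject.underlyingIso _)).eq_of_tgt m 0) }
    refine ⟨⟨Subobject.mk (0 : Z0 ⟶ A), ⟨nb⟩⟩, ?_, harrow⟩
    intro T
    show Subobject.mk (0 : Z0 ⟶ A) ≤ T.1
    refine Subobject.mk_le_of_comm 0 ?_
    rw [zero_comp]
end

section
/- Let X be a z-exact category and consider a commutative square of normal monomorphisms W ↣ X, W ↣ Y, X ↣ Z, Y ↣ Z such that the diagonal composite W ↣ Z is also a normal monomorphism. Then the cokernel of the induced morphism Y/W → Z/X is the canonical normal epimorphism Z/X ↠ Z/(X ⊔ Y), where X ⊔ Y is the join of the normal subobjects X and Y of Z. -/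
open CategoryTheory CategoryTheory.Limits

universe v u

variable {C : Type u} [Category.{v} C]

/-- Auxiliary: if `δ : P ⟶ Q` satisfies `p ≫ δ = cokernel.π k` with `p` epi, and every
`t` killing `a` satisfies `k ≫ p ≫ t = 0`, then `δ` is a cokernel of `a`. -/
noncomputable def auxIsColimit {C : Type u} [Category.{v} C] [HasZeroMorphisms C] [HasCokernels C]
    {A P S Z : C} (a : A ⟶ P) (k : S ⟶ Z) (δ : P ⟶ cokernel k) (p : Z ⟶ P) [Epi p]
    (hpδ : p ≫ δ = cokernel.π k) (w : a ≫ δ = 0)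
    (h : ∀ {T : C} (t : P ⟶ T), a ≫ t = 0 → k ≫ p ≫ t = 0) :
    IsColimit (CokernelCofork.ofπ δ w) := by
  have hepi : Epi δ := by
    have : Epi (p ≫ δ) := by rw [hpδ]; infer_instance
    exact epi_of_epi p δ
  refine CokernelCofork.IsColimit.ofπ δ w
    (fun {T} t ht => cokernel.desc k (p ≫ t) (h t ht))
    (fun {T} t ht => ?_) (fun {T} t ht m hm => ?_)
  · rw [← cancel_epi p, ← Category.assoc, hpδ, cokernel.π_desc]
  · rw [← cancel_epi δ, hm, ← cancel_epi p, ← Category.assoc, hpδ, cokernel.π_desc]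

/-- In a z-exact category, consider a commutative square of normal
monomorphisms `f : W ↣ X`, `g : W ↣ Y`, `x : X ↣ Z`, `y : Y ↣ Z` whose diagonal
`W ↣ Z` is also a normal monomorphism.  Then the cokernel of the induced morphism
`γ : Y/W ⟶ Z/X` is the canonical normal epimorphism `Z/X ↠ Z/(X ⊔ Y)`, where
`X ⊔ Y` is the join of the normal subobjects `X` and `Y` of `Z`, represented by the
kernel of the cokernel of the composite `Y ↣ Z ↠ Z/X`.  (The equations `h1` and `h2`
quantified below always hold; they merely make the canonical morphisms well defined.) -/
theorem stmt9 {C : Type u} [Category.{v} C] [HasZeroObject C] [HasZeroMorphisms C]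
    [HasKernels C] [HasCokernels C] {W X Y Z : C}
    (f : W ⟶ X) (g : W ⟶ Y) (x : X ⟶ Z) (y : Y ⟶ Z) (hsq : f ≫ x = g ≫ y)
    (hf : IsNormalMonoMap f) (hg : IsNormalMonoMap g)
    (hx : IsNormalMonoMap x) (hy : IsNormalMonoMap y)
    (hd : IsNormalMonoMap (f ≫ x))
    (h1 : g ≫ (y ≫ cokernel.π x) = 0)
    (h2 : x ≫ cokernel.π (kernel.ι (cokernel.π x ≫ cokernel.π (y ≫ cokernel.π x))) = 0) :
    IsNormalEpiMap (cokernel.desc x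
      (cokernel.π (kernel.ι (cokernel.π x ≫ cokernel.π (y ≫ cokernel.π x)))) h2) ∧
    ∃ w : cokernel.desc g (y ≫ cokernel.π x) h1 ≫ cokernel.desc x
        (cokernel.π (kernel.ι (cokernel.π x ≫ cokernel.π (y ≫ cokernel.π x)))) h2 = 0,
      Nonempty (IsColimit (CokernelCofork.ofπ (cokernel.desc x
        (cokernel.π (kernel.ι (cokernel.π x ≫ cokernel.π (y ≫ cokernel.π x)))) h2) w)) := by
  set p := cokernel.π x with hp
  set c : Y ⟶ cokernel x := y ≫ p with hc
  set k := kernel.ι (p ≫ cokernel.π c) with hk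
  set δ := cokernel.desc x (cokernel.π k) h2 with hδ
  set γ := cokernel.desc g c h1 with hγ
  have hpδ : p ≫ δ = cokernel.π k := cokernel.π_desc _ _ _
  -- `y` factors through `k`, so `y ≫ cokernel.π k = 0`.
  have hy0 : y ≫ (p ≫ cokernel.π c) = 0 := by
    rw [← Category.assoc, ← hc]; exact cokernel.condition c
  have hyq : y ≫ cokernel.π k = 0 := by
    have hfac : kernel.lift (p ≫ cokernel.π c) y hy0 ≫ k = y := kernel.lift_ι _ _ _
    rw [← hfac, Category.assoc, cokernel.condition, comp_zero]
  have hcδ : c ≫ δ = 0 := by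
    show (y ≫ p) ≫ δ = 0
    rw [Category.assoc, hpδ, hyq]
  -- condition needed by `auxIsColimit` for `a = c`
  have hcond : ∀ {T : C} (t : cokernel x ⟶ T), c ≫ t = 0 → k ≫ p ≫ t = 0 := by
    intro T t ht
    have hfac : cokernel.π c ≫ cokernel.desc c t ht = t := cokernel.π_desc _ _ _
    have h0 : k ≫ (p ≫ cokernel.π c) = 0 := kernel.condition _
    calc k ≫ p ≫ t = (k ≫ (p ≫ cokernel.π c)) ≫ cokernel.desc c t ht := by
          rw [Category.assoc, Category.assoc, hfac]
      _ = 0 := by rw [h0, zero_comp]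
  have hπγ : cokernel.π g ≫ γ = c := cokernel.π_desc _ _ _
  have hγδ : γ ≫ δ = 0 := by
    rw [← cancel_epi (cokernel.π g), ← Category.assoc, hπγ, hcδ, comp_zero]
  have hcondγ : ∀ {T : C} (t : cokernel x ⟶ T), γ ≫ t = 0 → k ≫ p ≫ t = 0 := by
    intro T t ht
    refine hcond t ?_
    rw [← hπγ, Category.assoc, ht, comp_zero]
  have hcol1 : IsColimit (CokernelCofork.ofπ δ hcδ) := auxIsColimit c k δ p hpδ hcδ hcond
  have hcol2 : IsColimit (CokernelCofork.ofπ δ hγδ) := auxIsColimit γ k δ p hpδ hγδ hcondγ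
  exact ⟨⟨⟨Y, c, hcδ, hcol1⟩⟩, hγδ, ⟨hcol2⟩⟩
end

section
/- Let L be a finite monoidal semilattice, viewed as an object of the category of commutative monoids. Then the map a ↦ ↓a = {k ∈ L | k ≤ a} is an isomorphism of lattices from L onto the lattice of normal submonoids of L (the normal subobjects of L in CommMon, ordered by inclusion), with inverse K ↦ max(K). -/
/-!
Every kernel `K = f⁻¹(1)` of a monoid homomorphism out of `(L, ⊔, ⊥)` contains `⊥`, is closed
under `⊔`, and is a lower set, since `x ≤ k` gives `f k = f (x ⊔ k) = f x * f k`. As `L` is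
finite, `K` then has a greatest element `a` and `K = ↓a`. Conversely `↓a` is the kernel of
`x ↦ x ⊔ a` onto the upper set `↑a`, a monoid under `⊔` with unit `a`.
-/

universe u

/-- A subset `K` of a monoidal semilattice `L` is a *normal submonoid* if it is the kernel
(preimage of the neutral element) of some monoid homomorphism out of `(L, ⊔, ⊥)`. -/
def IsNormalSubmonoidOfSemilattice {L : Type u} [SemilatticeSup L] [OrderBot L]
    (K : Set L) : Prop :=
  ∃ (N : Type u) (_ : Monoid N) (f : L → N),
    f ⊥ = 1 ∧ (∀ x y : L, f (x ⊔ y) = f x * f y) ∧ K = f ⁻¹' {1}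

open Set

section Order

variable {α : Type*} [SemilatticeSup α] {s : Set α}

lemma SupClosed.exists_isGreatest (hs : SupClosed s) (hfin : s.Finite) (hne : s.Nonempty) :
    ∃ a, IsGreatest s a := by
  have hne' : hfin.toFinset.Nonempty := hfin.toFinset_nonempty.2 hne
  refine ⟨hfin.toFinset.sup' hne' id, hs.finsetSup'_mem hne' fun i hi => ?_, fun x hx => ?_⟩
  · exact hfin.mem_toFinset.1 hi
  · exact Finset.le_sup' id (hfin.mem_toFinset.2 hx)

lemma IsLowerSet.eq_Iic_of_isGreatest (hs : IsLowerSet s) {a : α} (ha : IsGreatest s a) :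
    s = Iic a :=
  Set.ext fun _ => ⟨fun hx => ha.2 hx, fun hx => hs hx ha.1⟩

abbrev Ici.supMonoid (a : α) : Monoid (Ici a) where
  mul x y := ⟨x ⊔ y, le_sup_of_le_left x.2⟩
  one := ⟨a, le_rfl⟩
  mul_assoc x y z := Subtype.ext (sup_assoc ..)
  one_mul x := Subtype.ext (sup_eq_right.2 x.2)
  mul_one x := Subtype.ext (sup_eq_left.2 x.2)

end Order

section Kernel

variable {L : Type u} [SemilatticeSup L] [OrderBot L] {K : Set L}

lemma isNormalSubmonoidOfSemilattice_Iic (a : L) :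
    IsNormalSubmonoidOfSemilattice (Iic a) := by
  let := Ici.supMonoid a
  refine ⟨Ici a, inferInstance, fun x => ⟨x ⊔ a, le_sup_right⟩, ?_, fun x y => ?_, ?_⟩
  · exact Subtype.ext (bot_sup_eq a)
  · exact Subtype.ext (show x ⊔ y ⊔ a = x ⊔ a ⊔ (y ⊔ a) by rw [sup_sup_sup_comm, sup_idem])
  · ext x
    simp only [mem_Iic, mem_preimage, mem_singleton_iff, Subtype.ext_iff]
    exact sup_eq_right.symm

namespace IsNormalSubmonoidOfSemilattice

lemma bot_mem (hK : IsNormalSubmonoidOfSemilattice K) : ⊥ ∈ K := by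
  obtain ⟨N, _, f, hbot, -, rfl⟩ := hK
  exact hbot

lemma supClosed (hK : IsNormalSubmonoidOfSemilattice K) : SupClosed K := by
  obtain ⟨N, _, f, -, hsup, rfl⟩ := hK
  intro x (hx : f x = 1) y (hy : f y = 1)
  show f (x ⊔ y) = 1
  rw [hsup, hx, hy, one_mul]

lemma isLowerSet (hK : IsNormalSubmonoidOfSemilattice K) : IsLowerSet K := by
  obtain ⟨N, _, f, -, hsup, rfl⟩ := hK
  intro y x hxy (hy : f y = 1)
  show f x = 1
  simpa [hy] using (hsup x y).symm.trans (congrArg f (sup_eq_right.2 hxy))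

lemma exists_eq_Iic [Finite L] (hK : IsNormalSubmonoidOfSemilattice K) : ∃ a, K = Set.Iic a :=
  let ⟨a, ha⟩ := hK.supClosed.exists_isGreatest K.toFinite ⟨⊥, hK.bot_mem⟩
  ⟨a, hK.isLowerSet.eq_Iic_of_isGreatest ha⟩

end IsNormalSubmonoidOfSemilattice

end Kernel

/-- Let `L` be a finite monoidal semilattice, viewed as an object of the
category of commutative monoids.  Then `a ↦ ↓a` is an isomorphism of lattices from `L`
onto the lattice of normal submonoids of `L`, ordered by inclusion, with inverse sending
a normal submonoid `K` to its greatest element `max K`. -/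
theorem stmt10 {L : Type u} [SemilatticeSup L] [OrderBot L] [Finite L] :
    ∃ e : L ≃o {K : Set L // IsNormalSubmonoidOfSemilattice K},
      (∀ a : L, (e a : Set L) = Set.Iic a) ∧
      (∀ K : {K : Set L // IsNormalSubmonoidOfSemilattice K},
        IsGreatest (K : Set L) (e.symm K)) := by
  let down : L ↪o {K : Set L // IsNormalSubmonoidOfSemilattice K} :=
    OrderEmbedding.ofMapLEIff (fun a => ⟨Set.Iic a, isNormalSubmonoidOfSemilattice_Iic a⟩)
      fun _ _ => Iic_subset_Iic
  have hsurj : Function.Surjective down := fun K =>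
    let ⟨a, ha⟩ := K.2.exists_eq_Iic
    ⟨a, Subtype.ext ha.symm⟩
  let e := OrderIso.ofSurjective down hsurj
  refine ⟨e, fun _ => rfl, fun K => ?_⟩
  have hK : (K : Set L) = Set.Iic (e.symm K) := congrArg Subtype.val (e.apply_symm_apply K).symm
  exact hK ▸ isGreatest_Iic
end

section
/- Dinversion does not preserve normal maps in the category of commutative monoids. Concretely, let L be the pentagon monoidal semilattice with elements {0, C, B, D, A} ordered by 0 < C < B < A and 0 < D < A with D incomparable to B and C, viewed as a commutative monoid under join. Then: (1) the composite α : ↓D ↪ L ↠ L/↓B (where L/↓B ≅ ↑B via l ↦ l ∨ B) is an isomorphism of monoids, hence a normal morphism; (2) its dinverse β : ↓B ↪ L ↠ L/↓D (where L/↓D ≅ ↑D via l ↦ l ∨ D) sends both B and C to A, hence is not injective; (3) β is antinormal but not a normal morphism, i.e. β admits no factorization as a normal epimorphism followed by a normal monomorphism in CommMon. -/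
/-- The pentagon monoidal semilattice `0 < C < B < A`, `0 < D < A`,
with `D` incomparable to `B` and `C`. -/
inductive Pent : Type
  | zero | c | b | d | a
  deriving DecidableEq

instance : Fintype Pent :=
  ⟨{Pent.zero, Pent.c, Pent.b, Pent.d, Pent.a}, by intro x; cases x <;> decide⟩

namespace Pent

/-- The order of the pentagon, as a Boolean relation. -/
def leB : Pent → Pent → Bool
  | zero, _ => true
  | _, a => true
  | c, c => true
  | c, b => true
  | b, b => true
  | d, d => true
  | _, _ => false

/-- The join operation of the pentagon. -/
def supP : Pent → Pent → Pent
  | zero, x => x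
  | x, zero => x
  | a, _ => a
  | _, a => a
  | c, c => c
  | c, b => b
  | b, c => b
  | b, b => b
  | d, d => d
  | c, d => a
  | d, c => a
  | b, d => a
  | d, b => a

instance : LE Pent := ⟨fun x y => leB x y = true⟩

instance : DecidableRel (· ≤ · : Pent → Pent → Prop) := fun x y =>
  inferInstanceAs (Decidable (leB x y = true))

instance : SemilatticeSup Pent where
  sup := supP
  le := (· ≤ ·)
  le_refl := by decide
  le_trans := by decide
  le_antisymm := by decide
  le_sup_left := by decide
  le_sup_right := by decide
  sup_le := by decide

instance : OrderBot Pent where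
  bot := zero
  bot_le := by decide

/-- The pentagon as a commutative monoid `(L, ⊔, ⊥)`. -/
instance : CommMonoid Pent where
  mul := (· ⊔ ·)
  one := zero
  mul_assoc := by decide
  one_mul := by decide
  mul_one := by decide
  mul_comm := by decide

end Pent

open Pent

/-- The normal submonoid `↓B` of the pentagon. -/
def DownB : Type := {x : Pent // x ≤ Pent.b}

/-- The normal submonoid `↓D` of the pentagon. -/
def DownD : Type := {x : Pent // x ≤ Pent.d}

/-- The quotient `L/↓B ≅ ↑B` of the pentagon. -/
def UpB : Type := {x : Pent // Pent.b ≤ x}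

/-- The quotient `L/↓D ≅ ↑D` of the pentagon. -/
def UpD : Type := {x : Pent // Pent.d ≤ x}

instance : DecidableEq DownB := inferInstanceAs (DecidableEq {x : Pent // x ≤ Pent.b})
instance : DecidableEq DownD := inferInstanceAs (DecidableEq {x : Pent // x ≤ Pent.d})
instance : DecidableEq UpB := inferInstanceAs (DecidableEq {x : Pent // Pent.b ≤ x})
instance : DecidableEq UpD := inferInstanceAs (DecidableEq {x : Pent // Pent.d ≤ x})
instance : Fintype DownB := inferInstanceAs (Fintype {x : Pent // x ≤ Pent.b})
instance : Fintype DownD := inferInstanceAs (Fintype {x : Pent // x ≤ Pent.d})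
instance : Fintype UpB := inferInstanceAs (Fintype {x : Pent // Pent.b ≤ x})
instance : Fintype UpD := inferInstanceAs (Fintype {x : Pent // Pent.d ≤ x})

instance : CommMonoid DownB where
  mul x y := ⟨x.1 ⊔ y.1, sup_le x.2 y.2⟩
  one := ⟨Pent.zero, by decide⟩
  mul_assoc := by decide
  one_mul := by decide
  mul_one := by decide
  mul_comm := by decide

instance : CommMonoid DownD where
  mul x y := ⟨x.1 ⊔ y.1, sup_le x.2 y.2⟩
  one := ⟨Pent.zero, by decide⟩
  mul_assoc := by decide
  one_mul := by decide
  mul_one := by decide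
  mul_comm := by decide

instance : CommMonoid UpB where
  mul x y := ⟨x.1 ⊔ y.1, le_trans x.2 le_sup_left⟩
  one := ⟨Pent.b, le_refl _⟩
  mul_assoc := by decide
  one_mul := by decide
  mul_one := by decide
  mul_comm := by decide

instance : CommMonoid UpD where
  mul x y := ⟨x.1 ⊔ y.1, le_trans x.2 le_sup_left⟩
  one := ⟨Pent.d, le_refl _⟩
  mul_assoc := by decide
  one_mul := by decide
  mul_one := by decide
  mul_comm := by decide

/-- The inclusion `↓B ↪ L`. -/
def inclB : DownB →* Pent where
  toFun x := x.1
  map_one' := by decide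
  map_mul' := by decide

/-- The inclusion `↓D ↪ L`. -/
def inclD : DownD →* Pent where
  toFun x := x.1
  map_one' := by decide
  map_mul' := by decide

/-- The projection `L ↠ L/↓B ≅ ↑B`, `l ↦ l ⊔ B`. -/
def projB : Pent →* UpB where
  toFun l := ⟨l ⊔ Pent.b, le_sup_right⟩
  map_one' := rfl
  map_mul' := by intro x y; cases x <;> cases y <;> rfl

/-- The projection `L ↠ L/↓D ≅ ↑D`, `l ↦ l ⊔ D`. -/
def projD : Pent →* UpD where
  toFun l := ⟨l ⊔ Pent.d, le_sup_right⟩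
  map_one' := rfl
  map_mul' := by intro x y; cases x <;> cases y <;> rfl

/-- The antinormal morphism `α : ↓D ↪ L ↠ L/↓B`. -/
def alpha : DownD →* UpB := projB.comp inclD

/-- The dinverse antinormal morphism `β : ↓B ↪ L ↠ L/↓D`. -/
def beta : DownB →* UpD := projD.comp inclB

/-- A morphism of `CommMon` is a *normal epimorphism* if it is a cokernel of some
morphism: there is `u : P →* A` such that `e` is trivial on the image of `u` and `e` is
universal with this property. -/
def IsCokernelHom {A B : Type} [CommMonoid A] [CommMonoid B] (e : A →* B) : Prop :=
  ∃ (P : Type) (_ : CommMonoid P) (u : P →* A),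
    (∀ p : P, e (u p) = 1) ∧
    ∀ (T : Type) (_ : CommMonoid T) (h : A →* T), (∀ p : P, h (u p) = 1) →
      ∃! g : B →* T, g.comp e = h

/-- A morphism of `CommMon` is a *normal monomorphism* if it is a kernel of some
morphism: there is `v : B →* Q` such that `v ∘ m` is trivial and `m` is universal with
this property. -/
def IsKernelHom {A B : Type} [CommMonoid A] [CommMonoid B] (m : A →* B) : Prop :=
  ∃ (Q : Type) (_ : CommMonoid Q) (v : B →* Q),
    (∀ x : A, v (m x) = 1) ∧
    ∀ (T : Type) (_ : CommMonoid T) (h : T →* B), (∀ t : T, v (h t) = 1) →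
      ∃! g : T →* A, m.comp g = h

/-- A morphism of `CommMon` is *normal* if it factors as a normal epimorphism followed by
a normal monomorphism. -/
def IsNormalHom {A B : Type} [CommMonoid A] [CommMonoid B] (f : A →* B) : Prop :=
  ∃ (I : Type) (_ : CommMonoid I) (e : A →* I) (m : I →* B),
    IsCokernelHom e ∧ IsKernelHom m ∧ m.comp e = f

/-! A normal morphism `f = m ∘ e` with trivial kernel is injective: `e` then has trivial
kernel too, so it is the cokernel of a trivial map and `id` factors through it, while the
kernel `m` is a monomorphism. The dinverse `β` has trivial kernel, since `0` is the only
element of `↓B` below `D`, yet it identifies `B` and `C`. -/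

section NormalHom

variable {A B : Type} [CommMonoid A] [CommMonoid B]

theorem IsKernelHom.injective {m : A →* B} (hm : IsKernelHom m) : Function.Injective m := by
  obtain ⟨Q, _, v, hv, huniv⟩ := hm
  intro x y hxy
  obtain ⟨g, -, hg⟩ := huniv (Multiplicative ℕ) inferInstance (m.comp (powersHom A x))
    fun _ => hv _
  have hy : m.comp (powersHom A y) = m.comp (powersHom A x) := by
    ext
    simp [hxy]
  have : powersHom A y = powersHom A x := (hg _ hy).trans (hg _ rfl).symm
  simpa using (DFunLike.congr_fun this (Multiplicative.ofAdd 1)).symm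

theorem IsCokernelHom.injective {e : A →* B} (he : IsCokernelHom e)
    (hker : ∀ x, e x = 1 → x = 1) : Function.Injective e := by
  obtain ⟨P, _, u, hu, huniv⟩ := he
  obtain ⟨g, hg, -⟩ := huniv A inferInstance (MonoidHom.id A) fun p => hker _ (hu p)
  exact Function.LeftInverse.injective (g := g) (DFunLike.congr_fun hg)

theorem IsNormalHom.injective {f : A →* B} (hf : IsNormalHom f)
    (hker : ∀ x, f x = 1 → x = 1) : Function.Injective f := by
  obtain ⟨I, _, e, m, he, hm, rfl⟩ := hf
  have he_ker : ∀ x, e x = 1 → x = 1 := fun x hx => hker x (by simp [hx])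
  exact hm.injective.comp (he.injective he_ker)

theorem isKernelHom_of_injective {Q : Type} [CommMonoid Q] {m : A →* B} (v : B →* Q)
    (hm : Function.Injective m) (hker : ∀ y, v y = 1 ↔ ∃ x, m x = y) :
    IsKernelHom m := by
  refine ⟨Q, inferInstance, v, fun x => (hker (m x)).mpr ⟨x, rfl⟩, fun T _ h hh => ?_⟩
  let m' : A ≃* MonoidHom.mrange m := MulEquiv.ofBijective m.mrangeRestrict
    ⟨fun x y hxy => hm (congrArg Subtype.val hxy), m.mrangeRestrict_surjective⟩
  let g : T →* A := m'.symm.toMonoidHom.comp (h.codRestrict _ fun t => (hker _).mp (hh t))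
  have hg : m.comp g = h := by
    ext t
    exact congrArg Subtype.val (m'.apply_symm_apply _)
  exact ⟨g, hg, fun g' hg' => (MonoidHom.cancel_left hm).mp (hg'.trans hg.symm)⟩

theorem isCokernelHom_of_surjective {P : Type} [CommMonoid P] (u : P →* A) {e : A →* B}
    (hu : ∀ p, e (u p) = 1) (he : Function.Surjective e)
    (hker : ∀ a a', e a = e a' → ∃ p p', a * u p = a' * u p') : IsCokernelHom e := by
  refine ⟨P, inferInstance, u, hu, fun T _ h hh => ?_⟩
  have h_resp : ∀ a a', e a = e a' → h a = h a' := by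
    intro a a' haa'
    obtain ⟨p, p', hpp'⟩ := hker a a' haa'
    simpa [hh] using congrArg h hpp'
  let s := Function.surjInv he
  have hs : ∀ b, e (s b) = b := Function.surjInv_eq he
  let g : B →* T :=
    { toFun := fun b => h (s b)
      map_one' := by rw [h_resp (s 1) 1 (by rw [hs, map_one]), map_one]
      map_mul' := fun b b' => by
        rw [h_resp (s (b * b')) (s b * s b') (by rw [map_mul, hs, hs, hs]), map_mul] }
  have hg : g.comp e = h := MonoidHom.ext fun a => h_resp _ _ (hs _)
  exact ⟨g, hg, fun g' hg' => (MonoidHom.cancel_right he).mp (hg'.trans hg.symm)⟩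

theorem isNormalHom_of_bijective {f : A →* B} (hf : Function.Bijective f) : IsNormalHom f := by
  refine ⟨B, inferInstance, f, MonoidHom.id B, ?_, ?_, rfl⟩
  · exact isCokernelHom_of_surjective (1 : Unit →* A) (fun _ => by simp) hf.2
      fun a a' h => ⟨(), (), by simpa using hf.1 h⟩
  · exact isKernelHom_of_injective (1 : B →* Unit) Function.injective_id
      fun y => by simp

end NormalHom

theorem isKernelHom_inclB : IsKernelHom inclB :=
  isKernelHom_of_injective projB Subtype.val_injective (by decide)

theorem isCokernelHom_projD : IsCokernelHom projD :=
  isCokernelHom_of_surjective inclD (by decide) (by decide) (by decide)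

theorem eq_one_of_beta_eq_one : ∀ x : DownB, beta x = 1 → x = 1 := by
  decide

theorem not_injective_beta : ¬ Function.Injective beta := by
  decide

/-- Dinversion does not preserve normal maps in the category of
commutative monoids.  In the pentagon monoidal semilattice `Pent`:
(1) the composite `α : ↓D ↪ L ↠ L/↓B` is an isomorphism of monoids, hence a normal
morphism;
(2) its dinverse `β : ↓B ↪ L ↠ L/↓D` sends both `B` and `C` to `A`, hence is not
injective;
(3) `β` is antinormal (it is the normal monomorphism `↓B ↪ L` followed by the normal
epimorphism `L ↠ L/↓D`), but it is not a normal morphism: it admits no factorization as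
a normal epimorphism followed by a normal monomorphism in `CommMon`. -/
theorem stmt11 :
    (Function.Bijective alpha ∧ IsNormalHom alpha) ∧
    (beta ⟨Pent.b, le_refl _⟩ = ⟨Pent.a, by decide⟩ ∧
      beta ⟨Pent.c, by decide⟩ = ⟨Pent.a, by decide⟩ ∧
      ¬ Function.Injective beta) ∧
    (IsKernelHom inclB ∧ IsCokernelHom projD ∧ beta = projD.comp inclB ∧
      ¬ IsNormalHom beta) := by
  have alpha_bijective : Function.Bijective alpha := by decide
  exact ⟨⟨alpha_bijective, isNormalHom_of_bijective alpha_bijective⟩,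
    ⟨rfl, rfl, not_injective_beta⟩,
    ⟨isKernelHom_inclB, isCokernelHom_projD, rfl,
      fun h => not_injective_beta (h.injective eq_one_of_beta_eq_one)⟩⟩
end

section
/- If X is a di-exact z-exact category, then for every object A of X the lattice nsub(A) of normal subobjects of A is modular. -/
open CategoryTheory CategoryTheory.Limits

universe v u

variable {C : Type u} [Category.{v} C]

section MyAux
variable [HasZeroMorphisms C]

private lemma myMono {X Y : C} {m : X ⟶ Y} (hm : NormalMono m) : Mono m := by
  haveI := hm; infer_instance

private lemma myEpi {X Y : C} {e : X ⟶ Y} (he : NormalEpi e) : Epi e := by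
  haveI := he; infer_instance

private lemma normalMono_factor [HasCokernels C] {X Y Z : C} {m : X ⟶ Y} (hm : NormalMono m)
    (τ : Z ⟶ Y) (h : τ ≫ cokernel.π m = 0) : ∃ τ' : Z ⟶ X, τ' ≫ m = τ := by
  have hd : cokernel.π m ≫ cokernel.desc m hm.g hm.w = hm.g := cokernel.π_desc _ _ _
  have hτg : τ ≫ hm.g = 0 := by rw [← hd, ← Category.assoc, h, zero_comp]
  obtain ⟨ℓ, hℓ⟩ := KernelFork.IsLimit.lift' hm.isLimit τ hτg
  exact ⟨ℓ, hℓ⟩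

private lemma normalEpi_desc [HasKernels C] {X Y Z W : C} {e : X ⟶ Y} (he : NormalEpi e)
    {m : Y ⟶ W} (_ : Mono m) {f : X ⟶ W} (hf : e ≫ m = f)
    (ξ : X ⟶ Z) (h : kernel.ι f ≫ ξ = 0) : ∃ ρ : Y ⟶ Z, e ≫ ρ = ξ := by
  have hgf : he.g ≫ f = 0 := by rw [← hf, ← Category.assoc, he.w, zero_comp]
  have hk : kernel.lift f he.g hgf ≫ kernel.ι f = he.g := kernel.lift_ι _ _ _
  have hgξ : he.g ≫ ξ = 0 := by rw [← hk, Category.assoc, h, comp_zero]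
  obtain ⟨ρ, hρ⟩ := CokernelCofork.IsColimit.desc' he.isColimit ξ hgξ
  exact ⟨ρ, hρ⟩

private noncomputable def normalMono_iso_comp {X X' Y : C} (i : X' ≅ X) {m : X ⟶ Y}
    (hm : NormalMono m) : NormalMono (i.hom ≫ m) where
  Z := hm.Z
  g := hm.g
  w := by rw [Category.assoc, hm.w, comp_zero]
  isLimit := by
    haveI : Mono m := myMono hm
    refine KernelFork.IsLimit.ofι' _ _ (fun {W} k hk => ?_)
    obtain ⟨ℓ, hℓ⟩ := KernelFork.IsLimit.lift' hm.isLimit k hk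
    exact ⟨ℓ ≫ i.inv, by rw [Category.assoc, Iso.inv_hom_id_assoc]; simpa using hℓ⟩

private lemma normalMono_mk_arrow {X A : C} {m : X ⟶ A} [Mono m] (hm : NormalMono m) :
    Nonempty (NormalMono (Subobject.mk m).arrow) := by
  have h := Subobject.underlyingIso_hom_comp_eq_mk m
  rw [← h]
  exact ⟨normalMono_iso_comp _ hm⟩

end MyAux

/-- If `C` is a di-exact z-exact category, then for every object `A`
the lattice of normal subobjects of `A` is modular. -/
theorem stmt14 {C : Type u} [Category.{v} C] [HasZeroObject C] [HasZeroMorphisms C]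
    [HasKernels C] [HasCokernels C] (hdi : IsDiExact C) :
    ∀ A : C, NormalSubobjectsModular A := by
  intro A P Q R S T U V hRP hS hT hU hV
  -- easy direction : V ≤ T
  have hUP : U ≤ P := hU.1 (Set.mem_insert _ _)
  have hUQ : U ≤ Q := hU.1 (Set.mem_insert_of_mem _ rfl)
  have hQS : Q ≤ S := hS.1 (Set.mem_insert _ _)
  have hRS : R ≤ S := hS.1 (Set.mem_insert_of_mem _ rfl)
  have hVP : V ≤ P := hV.2 (fun x hx => by
    rcases hx with rfl | rfl
    · exact hUP
    · exact hRP)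
  have hVS : V ≤ S := hV.2 (fun x hx => by
    rcases hx with rfl | rfl
    · exact le_trans hUQ hQS
    · exact hRS)
  have hVT : V ≤ T := hT.2 (fun x hx => by
    rcases hx with rfl | rfl
    · exact hVP
    · exact hVS)
  -- hard direction : T ≤ V
  obtain ⟨hp⟩ := P.2
  obtain ⟨hb⟩ := Q.2
  obtain ⟨hn⟩ := V.2
  haveI : Mono Q.1.arrow := myMono hb
  set pA : (P.1 : C) ⟶ A := P.1.arrow with hpA_def
  set b : (Q.1 : C) ⟶ A := Q.1.arrow with hb_def
  set r : (R.1 : C) ⟶ A := R.1.arrow with hr_def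
  set qR := cokernel.π r with hqR_def
  set qP := cokernel.π pA with hqP_def
  have hRP' : R.1 ≤ P.1 := hRP
  set r₁ := Subobject.ofLE R.1 P.1 hRP' with hr₁_def
  have hr₁ : r₁ ≫ pA = r := Subobject.ofLE_arrow hRP'
  have h_rqP : r ≫ qP = 0 := by rw [← hr₁, Category.assoc, cokernel.condition, comp_zero]
  set π := cokernel.desc r qP h_rqP with hπ_def
  have hπ : qR ≫ π = qP := cokernel.π_desc _ _ _
  haveI hπepi : Epi π := by
    have : Epi (qR ≫ π) := by rw [hπ]; infer_instance
    exact epi_of_epi qR π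
  have hπw : (pA ≫ qR) ≫ π = 0 := by
    rw [Category.assoc, hπ, cokernel.condition]
  have hπNE : NormalEpi π := by
    refine ⟨_, pA ≫ qR, hπw, CokernelCofork.IsColimit.ofπ' π hπw (fun {Z0} k hk => ?_)⟩
    have hk' : pA ≫ qR ≫ k = 0 := by rw [← Category.assoc]; exact hk
    refine ⟨cokernel.desc pA (qR ≫ k) hk', ?_⟩
    have : qR ≫ π ≫ cokernel.desc pA (qR ≫ k) hk' = qR ≫ k := by
      rw [← Category.assoc, hπ, cokernel.π_desc]
    exact (cancel_epi qR).1 this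
  -- the join S as a kernel
  set cb := cokernel.π (b ≫ qR) with hcb_def
  set χ : A ⟶ cokernel (b ≫ qR) := qR ≫ cb with hχ_def
  set s := kernel.ι χ with hs_def
  have hsNM : NormalMono s := ⟨_, χ, kernel.condition χ, kernelIsKernel χ⟩
  -- di-exactness applications
  have hqRNE : NormalEpi qR := ⟨_, r, cokernel.condition r, cokernelIsCokernel r⟩
  have hqPNE : NormalEpi qP := ⟨_, pA, cokernel.condition pA, cokernelIsCokernel pA⟩
  obtain ⟨I₁, εQ, nQ, ⟨hεQ⟩, ⟨hnQ⟩, hfac1⟩ :=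
    hdi (b ≫ qR) ⟨_, b, qR, ⟨hb⟩, ⟨hqRNE⟩, rfl⟩
  obtain ⟨I₂, ε₂, m₂, ⟨hε₂⟩, ⟨hm₂⟩, hfac2⟩ :=
    hdi (b ≫ qP) ⟨_, b, qP, ⟨hb⟩, ⟨hqPNE⟩, rfl⟩
  obtain ⟨I₃, εβ, mβ, ⟨hεβ⟩, ⟨hmβ⟩, hfac3⟩ :=
    hdi (nQ ≫ π) ⟨_, nQ, π, ⟨hnQ⟩, ⟨hπNE⟩, rfl⟩
  haveI : Mono m₂ := myMono hm₂
  haveI : Mono mβ := myMono hmβ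
  haveI : Mono nQ := myMono hnQ
  haveI : Epi εQ := myEpi hεQ
  haveI : Epi εβ := myEpi hεβ
  haveI : Epi ε₂ := myEpi hε₂
  have key : εQ ≫ εβ ≫ mβ = b ≫ qP := by
    rw [hfac3, ← Category.assoc, hfac1, Category.assoc, hπ]
  -- mβ factors through m₂
  have hmβ0 : mβ ≫ cokernel.π m₂ = 0 := by
    have h0 : (εQ ≫ εβ) ≫ mβ ≫ cokernel.π m₂ = (εQ ≫ εβ) ≫ 0 := by
      rw [comp_zero]
      have e1 : (εQ ≫ εβ) ≫ mβ ≫ cokernel.π m₂ = (εQ ≫ εβ ≫ mβ) ≫ cokernel.π m₂ := by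
        simp only [Category.assoc]
      rw [e1, key, ← hfac2, Category.assoc, cokernel.condition, comp_zero]
    exact (cancel_epi (εQ ≫ εβ)).1 h0
  obtain ⟨ι₂, hι₂⟩ := normalMono_factor hm₂ mβ hmβ0
  have hΨι : εQ ≫ εβ ≫ ι₂ = ε₂ := by
    have h0 : (εQ ≫ εβ ≫ ι₂) ≫ m₂ = ε₂ ≫ m₂ := by
      have e1 : (εQ ≫ εβ ≫ ι₂) ≫ m₂ = εQ ≫ εβ ≫ (ι₂ ≫ m₂) := by simp only [Category.assoc]
      rw [e1, hι₂, key, hfac2]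
    exact (cancel_mono m₂).1 h0
  -- U as pullback
  set ku := kernel.ι (b ≫ qP) with hku_def
  set u : (kernel (b ≫ qP) : C) ⟶ A := ku ≫ b with hu_def
  have huqP : u ≫ qP = 0 := by rw [hu_def, Category.assoc, kernel.condition]
  set δ := cokernel.π (u ≫ qR) with hδ_def
  -- G2 : nQ ≫ δ factors through εβ
  have hkuξ : ku ≫ εQ ≫ nQ ≫ δ = 0 := by
    have e1 : ku ≫ εQ ≫ nQ ≫ δ = (ku ≫ (εQ ≫ nQ)) ≫ δ := by simp only [Category.assoc]
    rw [e1, hfac1]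
    have e2 : ku ≫ b ≫ qR = u ≫ qR := by rw [hu_def, Category.assoc]
    rw [show ku ≫ (b ≫ qR) = u ≫ qR from by rw [hu_def, Category.assoc], cokernel.condition]
  obtain ⟨ρ', hρ'⟩ := normalEpi_desc hε₂ ‹Mono m₂› hfac2 (εQ ≫ nQ ≫ δ) hkuξ
  have hnQδ : nQ ≫ δ = εβ ≫ ι₂ ≫ ρ' := by
    have h0 : εQ ≫ nQ ≫ δ = εQ ≫ εβ ≫ ι₂ ≫ ρ' := by
      rw [← hρ', ← hΨι]; simp only [Category.assoc]
    exact (cancel_epi εQ).1 h0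
  -- s̄ : S ⟶ I₁
  have hbqc : (b ≫ qR) ≫ cokernel.π nQ = 0 := by
    rw [← hfac1, Category.assoc, cokernel.condition, comp_zero]
  have hγ : cb ≫ cokernel.desc (b ≫ qR) (cokernel.π nQ) hbqc = cokernel.π nQ :=
    cokernel.π_desc _ _ _
  have hs0 : (s ≫ qR) ≫ cokernel.π nQ = 0 := by
    have e0 : s ≫ χ = 0 := kernel.condition χ
    calc (s ≫ qR) ≫ cokernel.π nQ
        = (s ≫ qR) ≫ cb ≫ cokernel.desc (b ≫ qR) (cokernel.π nQ) hbqc := by rw [hγ]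
      _ = (s ≫ χ) ≫ cokernel.desc (b ≫ qR) (cokernel.π nQ) hbqc := by
            simp only [hχ_def, Category.assoc]
      _ = 0 := by rw [e0, zero_comp]
  obtain ⟨sb, hsb⟩ := normalMono_factor hnQ (s ≫ qR) hs0
  set kt := kernel.ι (s ≫ qP) with hkt_def
  have h1 : (kt ≫ sb) ≫ εβ ≫ mβ = 0 := by
    calc (kt ≫ sb) ≫ εβ ≫ mβ
        = (kt ≫ sb) ≫ nQ ≫ π := by rw [hfac3]
      _ = kt ≫ (sb ≫ nQ) ≫ π := by simp only [Category.assoc]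
      _ = kt ≫ (s ≫ qR) ≫ π := by rw [hsb]
      _ = kt ≫ s ≫ qR ≫ π := by simp only [Category.assoc]
      _ = kt ≫ s ≫ qP := by rw [hπ]
      _ = 0 := kernel.condition (s ≫ qP)
  have h2 : (kt ≫ sb) ≫ εβ = 0 := by
    have h0 : ((kt ≫ sb) ≫ εβ) ≫ mβ = 0 ≫ mβ := by
      rw [zero_comp, Category.assoc]; exact h1
    exact (cancel_mono mβ).1 h0
  -- the core identity
  have core : kt ≫ s ≫ qR ≫ δ = 0 := by
    calc kt ≫ s ≫ qR ≫ δ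
        = kt ≫ (s ≫ qR) ≫ δ := by simp only [Category.assoc]
      _ = kt ≫ (sb ≫ nQ) ≫ δ := by rw [hsb]
      _ = kt ≫ sb ≫ nQ ≫ δ := by simp only [Category.assoc]
      _ = kt ≫ sb ≫ εβ ≫ ι₂ ≫ ρ' := by rw [hnQδ]
      _ = ((kt ≫ sb) ≫ εβ) ≫ ι₂ ≫ ρ' := by simp only [Category.assoc]
      _ = 0 := by rw [h2, zero_comp]
  -- subobject glue: T ≤ mk (kernel.ι (qR ≫ δ))
  have hbχ : b ≫ χ = 0 := by
    rw [hχ_def, ← Category.assoc, cokernel.condition]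
  have hrχ : r ≫ χ = 0 := by
    rw [hχ_def, ← Category.assoc, cokernel.condition, zero_comp]
  have hQmkS : Q.1 ≤ Subobject.mk s :=
    Subobject.le_mk_of_comm (kernel.lift χ b hbχ) (kernel.lift_ι _ _ _)
  have hRmkS : R.1 ≤ Subobject.mk s :=
    Subobject.le_mk_of_comm (kernel.lift χ r hrχ) (kernel.lift_ι _ _ _)
  have hSmkS : S ≤ ⟨Subobject.mk s, normalMono_mk_arrow hsNM⟩ := hS.2 (fun x hx => by
    rcases hx with rfl | rfl
    · exact Subtype.coe_le_coe.1 hQmkS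
    · exact Subtype.coe_le_coe.1 hRmkS)
  have hTP : T ≤ P := hT.1 (Set.mem_insert _ _)
  have hTS : T ≤ S := hT.1 (Set.mem_insert_of_mem _ rfl)
  have hTmkS : T.1 ≤ Subobject.mk s := le_trans hTS hSmkS
  obtain ⟨f₂', hf₂'s⟩ : ∃ g : (T.1 : C) ⟶ (kernel χ : C), g ≫ s = T.1.arrow := by
    refine ⟨Subobject.ofLE T.1 (Subobject.mk s) hTmkS ≫ (Subobject.underlyingIso s).hom, ?_⟩
    rw [Category.assoc, Subobject.underlyingIso_hom_comp_eq_mk]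
    exact Subobject.ofLE_arrow hTmkS
  have hTP' : T.1 ≤ P.1 := hTP
  have hf₁ : Subobject.ofLE T.1 P.1 hTP' ≫ pA = T.1.arrow := Subobject.ofLE_arrow hTP'
  have hf₂'0 : f₂' ≫ s ≫ qP = 0 := by
    rw [← Category.assoc, hf₂'s, ← hf₁, Category.assoc, cokernel.condition, comp_zero]
  have hTarrow0 : T.1.arrow ≫ qR ≫ δ = 0 := by
    have hlift : kernel.lift (s ≫ qP) f₂' hf₂'0 ≫ kt = f₂' := kernel.lift_ι _ _ _
    calc T.1.arrow ≫ qR ≫ δ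
        = (kernel.lift (s ≫ qP) f₂' hf₂'0 ≫ kt ≫ s) ≫ qR ≫ δ := by
          rw [show kernel.lift (s ≫ qP) f₂' hf₂'0 ≫ kt ≫ s = T.1.arrow from by
            rw [← Category.assoc, hlift, hf₂'s]]
      _ = kernel.lift (s ≫ qP) f₂' hf₂'0 ≫ kt ≫ s ≫ qR ≫ δ := by
          simp only [Category.assoc]
      _ = 0 := by rw [core, comp_zero]
  have hTmkv : T.1 ≤ Subobject.mk (kernel.ι (qR ≫ δ)) := by
    have h0 : T.1.arrow ≫ qR ≫ δ = 0 := hTarrow0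
    exact Subobject.le_mk_of_comm (kernel.lift (qR ≫ δ) T.1.arrow h0) (kernel.lift_ι _ _ _)
  -- u is a normal mono
  haveI : Mono u := by rw [hu_def]; exact mono_comp _ _
  have keyu : ∀ {Z0 : C} (τ : Z0 ⟶ A), τ ≫ cokernel.π u = 0 →
      ∃ ℓ : Z0 ⟶ (kernel (b ≫ qP) : C), ℓ ≫ u = τ := by
    intro Z0 τ hτ
    have hub : u ≫ cokernel.π b = 0 := by rw [hu_def, Category.assoc, cokernel.condition, comp_zero]
    have hα : cokernel.π u ≫ cokernel.desc u (cokernel.π b) hub = cokernel.π b :=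
      cokernel.π_desc _ _ _
    have hτb0 : τ ≫ cokernel.π b = 0 := by rw [← hα, ← Category.assoc, hτ, zero_comp]
    obtain ⟨τb, hτb⟩ := normalMono_factor hb τ hτb0
    have hβu : cokernel.π u ≫ cokernel.desc u qP huqP = qP := cokernel.π_desc _ _ _
    have hτqP : τ ≫ qP = 0 := by rw [← hβu, ← Category.assoc, hτ, zero_comp]
    have hτbq : τb ≫ b ≫ qP = 0 := by rw [← Category.assoc, hτb]; exact hτqP
    refine ⟨kernel.lift (b ≫ qP) τb hτbq, ?_⟩
    rw [hu_def, ← Category.assoc, kernel.lift_ι, hτb]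
  have huNM : NormalMono u :=
    ⟨_, cokernel.π u, cokernel.condition u,
      KernelFork.IsLimit.ofι' u (cokernel.condition u)
        (fun {Z0} k hk => ⟨(keyu k hk).choose, (keyu k hk).choose_spec⟩)⟩
  obtain ⟨u₁, hu₁⟩ := normalMono_factor hp u huqP
  have hmkuP : Subobject.mk u ≤ P.1 := Subobject.mk_le_of_comm u₁ hu₁
  have hmkuQ : Subobject.mk u ≤ Q.1 := Subobject.mk_le_of_comm ku (by rw [hu_def])
  have hmkUU : (⟨Subobject.mk u, normalMono_mk_arrow huNM⟩ : NormalSubobject A) ≤ U :=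
    hU.2 (fun x hx => by
      rcases hx with rfl | rfl
      · exact Subtype.coe_le_coe.1 hmkuP
      · exact Subtype.coe_le_coe.1 hmkuQ)
  have hUV : U ≤ V := hV.1 (Set.mem_insert _ _)
  have hRV : R ≤ V := hV.1 (Set.mem_insert_of_mem _ rfl)
  have hmkuV : Subobject.mk u ≤ V.1 := le_trans hmkUU hUV
  -- V-side : mk (kernel.ι (qR ≫ δ)) ≤ V
  have hu_cN : u ≫ cokernel.π V.1.arrow = 0 := by
    have harr : (Subobject.mk u).arrow ≫ cokernel.π V.1.arrow = 0 := by
      rw [← Subobject.ofLE_arrow hmkuV, Category.assoc, cokernel.condition, comp_zero]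
    rw [← Subobject.underlyingIso_arrow u, Category.assoc, harr, comp_zero]
  have hr_cN : r ≫ cokernel.π V.1.arrow = 0 := by
    rw [hr_def, ← Subobject.ofLE_arrow hRV, Category.assoc, cokernel.condition, comp_zero]
  have haDesc : qR ≫ cokernel.desc r (cokernel.π V.1.arrow) hr_cN = cokernel.π V.1.arrow :=
    cokernel.π_desc _ _ _
  have hα2pre : (u ≫ qR) ≫ cokernel.desc r (cokernel.π V.1.arrow) hr_cN = 0 := by
    rw [Category.assoc, haDesc]; exact hu_cN
  have hα₂ : δ ≫ cokernel.desc (u ≫ qR) _ hα2pre = cokernel.desc r (cokernel.π V.1.arrow) hr_cN :=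
    cokernel.π_desc _ _ _
  have hvc : kernel.ι (qR ≫ δ) ≫ cokernel.π V.1.arrow = 0 := by
    rw [← haDesc, ← hα₂]
    have e1 : kernel.ι (qR ≫ δ) ≫ qR ≫ δ ≫ cokernel.desc (u ≫ qR) _ hα2pre
        = (kernel.ι (qR ≫ δ) ≫ (qR ≫ δ)) ≫ cokernel.desc (u ≫ qR) _ hα2pre := by
      simp only [Category.assoc]
    rw [e1, kernel.condition, zero_comp]
  obtain ⟨v₁, hv₁⟩ := normalMono_factor hn (kernel.ι (qR ≫ δ)) hvc
  have hmkvV : Subobject.mk (kernel.ι (qR ≫ δ)) ≤ V.1 := Subobject.mk_le_of_comm v₁ hv₁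
  have hTV : T ≤ V := Subtype.coe_le_coe.1 (le_trans hTmkv hmkvV)
  exact le_antisymm hTV hVT
end

section
/- If X is a di-exact z-exact category, then dinversion preserves normal maps in the category ses(X) of short exact sequences of X: for every object S of ses(X) and all normal monomorphisms m : T ↣ S and μ : U ↣ S in ses(X), the composite T ↣ S ↠ S/U is a normal morphism if and only if the composite U ↣ S ↠ S/T is a normal morphism. -/
open CategoryTheory CategoryTheory.Limits

universe v u

variable {C : Type u} [Category.{v} C]

/-- A short exact sequence in a pointed category: `f` is a kernel of `g` and
`g` is a cokernel of `f`. -/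
structure SES (C : Type u) [Category.{v} C] [HasZeroMorphisms C] : Type (max u v) where
  X : C
  Y : C
  Z : C
  f : X ⟶ Y
  g : Y ⟶ Z
  w : f ≫ g = 0
  isKernel : Nonempty (IsLimit (KernelFork.ofι f w))
  isCokernel : Nonempty (IsColimit (CokernelCofork.ofπ g w))

namespace SES

variable {C : Type u} [Category.{v} C] [HasZeroMorphisms C]

/-- Morphisms of short exact sequences: componentwise commuting triples. -/
@[ext] structure Hom (S T : SES C) : Type v where
  a : S.X ⟶ T.X
  b : S.Y ⟶ T.Y
  c : S.Z ⟶ T.Z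
  comm₁ : S.f ≫ b = a ≫ T.f
  comm₂ : S.g ≫ c = b ≫ T.g

instance : Category (SES C) where
  Hom := Hom
  id S := ⟨𝟙 _, 𝟙 _, 𝟙 _, by simp, by simp⟩
  comp u v := ⟨u.a ≫ v.a, u.b ≫ v.b, u.c ≫ v.c,
    by rw [← Category.assoc, u.comm₁, Category.assoc, v.comm₁, ← Category.assoc],
    by rw [← Category.assoc, u.comm₂, Category.assoc, v.comm₂, ← Category.assoc]⟩
  id_comp u := by apply Hom.ext <;> simp [CategoryStruct.id, CategoryStruct.comp]
  comp_id u := by apply Hom.ext <;> simp [CategoryStruct.id, CategoryStruct.comp]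
  assoc u v w := by apply Hom.ext <;> simp [CategoryStruct.comp]

instance : HasZeroMorphisms (SES C) where
  zero S T := ⟨⟨0, 0, 0, by simp, by simp⟩⟩
  comp_zero u T := by apply Hom.ext <;> exact comp_zero
  zero_comp S {T U} u := by apply Hom.ext <;> exact zero_comp

end SES

/-!
A morphism `φ : U ⟶ Q` of short exact sequences is normal exactly when its middle component
factors as a normal epimorphism `e` followed by a normal monomorphism `j` such that the kernel
of `j ≫ Q.g` is generated by the image of `U.f` under `e`. Write `S = (X ↣ Y ↠ Z)` and let
`B`, `V` be the middle terms of `T`, `U`. For `m ≫ cU` the condition says that the image of `B`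
in `Y/V` meets `(X ∨ V)/V` only in the image of `B ∧ X`; by di-exactness this is equivalent to
`B ∧ (X ∨ V) ≤ (B ∧ X) ∨ (B ∧ V)`, which can in turn be read off in `Y/X` instead of `Y/V`. In
`Y/X` the condition only involves the meet of the images of `B` and of `V`, and that meet is
symmetric in `B` and `V`; running the same translations backwards with `B` and `V` exchanged
gives the condition for `μ ≫ cT`.
-/

section ZeroMorphisms

variable [HasZeroMorphisms C]

structure IsKer {K A B : C} (k : K ⟶ A) (f : A ⟶ B) : Prop where
  w : k ≫ f = 0
  mono : Mono k
  lift : ∀ ⦃P : C⦄ (t : P ⟶ A), t ≫ f = 0 → ∃ s : P ⟶ K, s ≫ k = t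

structure IsCoker {A B Q : C} (q : B ⟶ Q) (f : A ⟶ B) : Prop where
  w : f ≫ q = 0
  epi : Epi q
  desc : ∀ ⦃P : C⦄ (t : B ⟶ P), f ≫ t = 0 → ∃ s : Q ⟶ P, q ≫ s = t

structure IsJointCoker {A₁ A₂ B Q : C} (q : B ⟶ Q) (f₁ : A₁ ⟶ B) (f₂ : A₂ ⟶ B) : Prop where
  w₁ : f₁ ≫ q = 0
  w₂ : f₂ ≫ q = 0
  epi : Epi q
  desc : ∀ ⦃P : C⦄ (t : B ⟶ P), f₁ ≫ t = 0 → f₂ ≫ t = 0 → ∃ s : Q ⟶ P, q ≫ s = t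

section Kernels

variable {K A B : C} {k : K ⟶ A} {f : A ⟶ B}

theorem IsKer.of_isLimit {w : k ≫ f = 0} (h : IsLimit (KernelFork.ofι k w)) : IsKer k f :=
  ⟨w, ⟨fun _ _ huv => Fork.IsLimit.hom_ext h huv⟩,
    fun _ t ht => ⟨_, (KernelFork.IsLimit.lift' h t ht).2⟩⟩

noncomputable def IsKer.isLimit (h : IsKer k f) : IsLimit (KernelFork.ofι k h.w) := by
  have := h.mono
  exact KernelFork.IsLimit.ofι' k h.w fun t ht => ⟨_, (h.lift t ht).choose_spec⟩

theorem IsKer.isNormalMonoMap (h : IsKer k f) : IsNormalMonoMap k :=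
  ⟨⟨B, f, h.w, h.isLimit⟩⟩

theorem IsKer.of_comp_mono {B' : C} {m : B ⟶ B'} [Mono m] (h : IsKer k (f ≫ m)) :
    IsKer k f :=
  ⟨by rw [← cancel_mono m, Category.assoc, h.w, zero_comp], h.mono,
    fun _ t ht => h.lift t (by rw [← Category.assoc, ht, zero_comp])⟩

theorem IsKer.left_of_comp {K' : C} {k' : K' ⟶ K} [Mono k] (h : IsKer (k' ≫ k) f) :
    IsKer k' (k ≫ f) := by
  have := h.mono
  refine ⟨by rw [← Category.assoc, h.w], mono_of_mono k' k, fun _ t ht => ?_⟩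
  obtain ⟨s, hs⟩ := h.lift (t ≫ k) (by rw [Category.assoc, ht])
  exact ⟨s, by rw [← cancel_mono k, Category.assoc, hs]⟩

theorem IsKer.iso_comp {K' : C} (h : IsKer k f) (i : K' ≅ K) : IsKer (i.hom ≫ k) f := by
  have := h.mono
  refine ⟨by rw [Category.assoc, h.w, comp_zero], inferInstance, fun _ t ht => ?_⟩
  obtain ⟨s, hs⟩ := h.lift t ht
  exact ⟨s ≫ i.inv, by simpa using hs⟩

theorem IsKer.comp_iso {A' : C} (h : IsKer k f) (i : A ≅ A') :
    IsKer (k ≫ i.hom) (i.inv ≫ f) := by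
  have := h.mono
  refine ⟨by simpa using h.w, inferInstance, fun _ t ht => ?_⟩
  obtain ⟨s, hs⟩ := h.lift (t ≫ i.inv) (by simpa using ht)
  exact ⟨s, by rw [← Category.assoc, hs, Category.assoc, Iso.inv_hom_id, Category.comp_id]⟩

theorem IsKer.exists_iso {K' : C} {k' : K' ⟶ A} (h : IsKer k f) (h' : IsKer k' f) :
    ∃ i : K ≅ K', i.hom ≫ k' = k := by
  obtain ⟨s, hs⟩ := h'.lift k h.w
  obtain ⟨s', hs'⟩ := h.lift k' h'.w
  have := h.mono
  have := h'.mono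
  exact ⟨⟨s, s', by simp [← cancel_mono k, hs, hs'], by simp [← cancel_mono k', hs, hs']⟩, hs⟩

end Kernels

section Cokernels

variable {A B Q : C} {q : B ⟶ Q} {f : A ⟶ B}

theorem IsCoker.of_isColimit {w : f ≫ q = 0} (h : IsColimit (CokernelCofork.ofπ q w)) :
    IsCoker q f :=
  ⟨w, ⟨fun _ _ huv => Cofork.IsColimit.hom_ext h huv⟩,
    fun _ t ht => ⟨_, (CokernelCofork.IsColimit.desc' h t ht).2⟩⟩

noncomputable def IsCoker.isColimit (h : IsCoker q f) :
    IsColimit (CokernelCofork.ofπ q h.w) := by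
  have := h.epi
  exact CokernelCofork.IsColimit.ofπ' q h.w fun t ht => ⟨_, (h.desc t ht).choose_spec⟩

theorem IsCoker.isNormalEpiMap (h : IsCoker q f) : IsNormalEpiMap q :=
  ⟨⟨A, f, h.w, h.isColimit⟩⟩

theorem IsCoker.of_epi_comp {A' : C} {e : A' ⟶ A} [Epi e] (h : IsCoker q (e ≫ f)) :
    IsCoker q f :=
  ⟨by rw [← cancel_epi e, ← Category.assoc, h.w, comp_zero], h.epi,
    fun _ t ht => h.desc t (by rw [Category.assoc, ht, comp_zero])⟩

theorem IsCoker.comp_iso {Q' : C} (h : IsCoker q f) (i : Q ≅ Q') : IsCoker (q ≫ i.hom) f := by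
  have := h.epi
  refine ⟨by rw [← Category.assoc, h.w, zero_comp], inferInstance, fun _ t ht => ?_⟩
  obtain ⟨s, hs⟩ := h.desc t ht
  exact ⟨i.inv ≫ s, by simpa using hs⟩

theorem IsCoker.iso_comp {B' : C} (h : IsCoker q f) (i : B' ≅ B) :
    IsCoker (i.hom ≫ q) (f ≫ i.inv) := by
  have := h.epi
  refine ⟨by simpa using h.w, inferInstance, fun _ t ht => ?_⟩
  obtain ⟨s, hs⟩ := h.desc (i.inv ≫ t) (by simpa using ht)
  exact ⟨s, by simp [hs]⟩

theorem IsCoker.exists_iso {Q' : C} {q' : B ⟶ Q'} (h : IsCoker q f) (h' : IsCoker q' f) :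
    ∃ i : Q ≅ Q', q ≫ i.hom = q' := by
  obtain ⟨s, hs⟩ := h.desc q' h'.w
  obtain ⟨s', hs'⟩ := h'.desc q h.w
  have := h.epi
  have := h'.epi
  exact ⟨⟨s, s', by simp [← cancel_epi q, reassoc_of% hs, hs'],
    by simp [← cancel_epi q', reassoc_of% hs', hs]⟩, hs⟩

end Cokernels

theorem IsNormalMonoMap.mono {A B : C} {k : A ⟶ B} (h : IsNormalMonoMap k) : Mono k := by
  obtain ⟨_⟩ := h
  infer_instance

theorem IsNormalEpiMap.epi {A B : C} {q : A ⟶ B} (h : IsNormalEpiMap q) : Epi q := by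
  obtain ⟨_⟩ := h
  infer_instance

theorem IsNormalMonoMap.exists_isKer {A B : C} {k : A ⟶ B} (h : IsNormalMonoMap k) :
    ∃ (W : C) (f : B ⟶ W), IsKer k f :=
  let ⟨n⟩ := h; ⟨n.Z, n.g, .of_isLimit n.isLimit⟩

theorem IsNormalEpiMap.exists_isCoker {A B : C} {q : A ⟶ B} (h : IsNormalEpiMap q) :
    ∃ (W : C) (f : W ⟶ A), IsCoker q f :=
  let ⟨n⟩ := h; ⟨n.W, n.g, .of_isColimit n.isColimit⟩

theorem IsNormalMonoMap.isKer_of_isCoker {K A Q : C} {k : K ⟶ A} {c : A ⟶ Q}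
    (hk : IsNormalMonoMap k) (hc : IsCoker c k) : IsKer k c := by
  obtain ⟨W, f, hkf⟩ := hk.exists_isKer
  refine ⟨hc.w, hkf.mono, fun _ t ht => hkf.lift t ?_⟩
  obtain ⟨s, rfl⟩ := hc.desc f hkf.w
  rw [← Category.assoc, ht, zero_comp]

theorem IsNormalEpiMap.isCoker_of_isKer {K B Q : C} {q : B ⟶ Q} {k : K ⟶ B}
    (hq : IsNormalEpiMap q) (hk : IsKer k q) : IsCoker q k := by
  obtain ⟨W, f, hqf⟩ := hq.exists_isCoker
  refine ⟨hk.w, hqf.epi, fun _ t ht => hqf.desc t ?_⟩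
  obtain ⟨s, rfl⟩ := hk.lift f hqf.w
  rw [Category.assoc, ht, comp_zero]

theorem isKer_kernelι [HasKernels C] {A B : C} (f : A ⟶ B) : IsKer (kernel.ι f) f :=
  IsKer.of_isLimit (w := kernel.condition f) (kernelIsKernel f)

theorem isCoker_cokernelπ [HasCokernels C] {A B : C} (f : A ⟶ B) :
    IsCoker (cokernel.π f) f :=
  IsCoker.of_isColimit (w := cokernel.condition f) (cokernelIsCokernel f)

end ZeroMorphisms

section JointCokernels

variable [HasZeroMorphisms C] {A₁ A₂ B Q : C} {q : B ⟶ Q} {f₁ : A₁ ⟶ B} {f₂ : A₂ ⟶ B}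

theorem IsCoker.isJointCoker_comp {R : C} {p : Q ⟶ R} (h : IsCoker q f₂)
    (hp : IsCoker p (f₁ ≫ q)) : IsJointCoker (q ≫ p) f₁ f₂ := by
  have := h.epi
  have := hp.epi
  refine ⟨by rw [← Category.assoc, hp.w], by rw [← Category.assoc, h.w, zero_comp],
    inferInstance, fun _ t ht₁ ht₂ => ?_⟩
  obtain ⟨s, rfl⟩ := h.desc t ht₂
  obtain ⟨s', rfl⟩ := hp.desc s (by rwa [Category.assoc])
  exact ⟨s', Category.assoc _ _ _⟩

theorem IsJointCoker.symm (h : IsJointCoker q f₁ f₂) : IsJointCoker q f₂ f₁ :=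
  ⟨h.w₂, h.w₁, h.epi, fun _ t h₂ h₁ => h.desc t h₁ h₂⟩

theorem IsJointCoker.isCoker_of_isKer {K : C} {k : K ⟶ B} (h : IsJointCoker q f₁ f₂)
    (hk : IsKer k q) : IsCoker q k := by
  refine ⟨hk.w, h.epi, fun _ t ht => h.desc t ?_ ?_⟩
  · obtain ⟨s, rfl⟩ := hk.lift f₁ h.w₁
    rw [Category.assoc, ht, comp_zero]
  · obtain ⟨s, rfl⟩ := hk.lift f₂ h.w₂
    rw [Category.assoc, ht, comp_zero]

theorem IsCoker.isNormalEpiMap_comp [HasKernels C] {R : C} {p : Q ⟶ R} (h : IsCoker q f₂)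
    (hp : IsCoker p (f₁ ≫ q)) : IsNormalEpiMap (q ≫ p) :=
  ((h.isJointCoker_comp hp).isCoker_of_isKer (isKer_kernelι _)).isNormalEpiMap

end JointCokernels

section Subobjects

variable [HasZeroMorphisms C]

theorem exists_comp_kernel_comp_eq {Z M₁ M₂ Z₁ Z₂ K₁ K₂ : C} {j₁ : M₁ ⟶ Z} {j₂ : M₂ ⟶ Z}
    {q₁ : Z ⟶ Z₁} {q₂ : Z ⟶ Z₂} {k₁ : K₁ ⟶ M₁} {k₂ : K₂ ⟶ M₂} (hj₁ : j₁ ≫ q₁ = 0)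
    (hj₂ : IsKer j₂ q₂) (hk₁ : k₁ ≫ j₁ ≫ q₂ = 0) (hk₂ : IsKer k₂ (j₂ ≫ q₁)) :
    ∃ φ : K₁ ⟶ K₂, φ ≫ k₂ ≫ j₂ = k₁ ≫ j₁ := by
  obtain ⟨s, hs⟩ := hj₂.lift (k₁ ≫ j₁) (by rw [Category.assoc, hk₁])
  obtain ⟨φ, rfl⟩ := hk₂.lift s (by rw [← Category.assoc, hs, Category.assoc, hj₁, comp_zero])
  exact ⟨φ, by rw [← Category.assoc, hs]⟩

/-- The meet of two normal subobjects `j₁`, `j₂` does not depend on the order in which it is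
computed. -/
theorem exists_iso_kernel_comp_eq {Z M₁ M₂ Z₁ Z₂ K₁ K₂ : C} {j₁ : M₁ ⟶ Z} {j₂ : M₂ ⟶ Z}
    {q₁ : Z ⟶ Z₁} {q₂ : Z ⟶ Z₂} {k₁ : K₁ ⟶ M₁} {k₂ : K₂ ⟶ M₂} (hj₁ : IsKer j₁ q₁)
    (hj₂ : IsKer j₂ q₂) (hk₁ : IsKer k₁ (j₁ ≫ q₂)) (hk₂ : IsKer k₂ (j₂ ≫ q₁)) :
    ∃ i : K₁ ≅ K₂, i.hom ≫ k₂ ≫ j₂ = k₁ ≫ j₁ := by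
  obtain ⟨φ, hφ⟩ := exists_comp_kernel_comp_eq hj₁.w hj₂ hk₁.w hk₂
  obtain ⟨ψ, hψ⟩ := exists_comp_kernel_comp_eq hj₂.w hj₁ hk₂.w hk₁
  have := hj₁.mono; have := hj₂.mono; have := hk₁.mono; have := hk₂.mono
  exact ⟨⟨φ, ψ, by simp [← cancel_mono (k₁ ≫ j₁), hφ, hψ],
    by simp [← cancel_mono (k₂ ≫ j₂), hφ, hψ]⟩, hφ⟩

/-- The kernel of `x` lies in the normal closure of the image of `y`, tested against all
morphisms out of `M` that kill `y`. -/
def KerLENormalClosure {A M N : C} (x : M ⟶ N) (y : A ⟶ M) : Prop :=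
  ∀ ⦃P E : C⦄ (t : P ⟶ M) (c : M ⟶ E), t ≫ x = 0 → y ≫ c = 0 → t ≫ c = 0

def KerLEJointClosure {A₁ A₂ M N : C} (x : M ⟶ N) (y₁ : A₁ ⟶ M) (y₂ : A₂ ⟶ M) : Prop :=
  ∀ ⦃P E : C⦄ (t : P ⟶ M) (c : M ⟶ E), t ≫ x = 0 → y₁ ≫ c = 0 → y₂ ≫ c = 0 → t ≫ c = 0

theorem KerLEJointClosure.symm {A₁ A₂ M N : C} {x : M ⟶ N} {y₁ : A₁ ⟶ M} {y₂ : A₂ ⟶ M}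
    (h : KerLEJointClosure x y₁ y₂) : KerLEJointClosure x y₂ y₁ :=
  fun _ _ t c ht h₂ h₁ => h t c ht h₁ h₂

theorem kerLENormalClosure_of_epi_comp_eq {A K K' M N : C} {x : M ⟶ N} {y : A ⟶ M}
    {k : K ⟶ M} (hk : IsKer k x) {ε : K' ⟶ K} [Epi ε] {α : K' ⟶ A} (h : ε ≫ k = α ≫ y) :
    KerLENormalClosure x y := by
  intro P E t c ht hc
  obtain ⟨s, rfl⟩ := hk.lift t ht
  have hkc : k ≫ c = 0 := by
    rw [← cancel_epi ε, ← Category.assoc, h, Category.assoc, hc, comp_zero, comp_zero]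
  rw [Category.assoc, hkc, comp_zero]

end Subobjects

section DiExact

variable [HasZeroMorphisms C]

theorem IsDiExact.exists_image_factorization (hdi : IsDiExact C) {A Y B K : C} {u : A ⟶ Y}
    {w : Y ⟶ B} {k : K ⟶ A} (hu : IsNormalMonoMap u) (hw : IsNormalEpiMap w)
    (hk : IsKer k (u ≫ w)) :
    ∃ (I : C) (e : A ⟶ I) (m : I ⟶ B), e ≫ m = u ≫ w ∧ IsNormalMonoMap m ∧ IsCoker e k := by
  obtain ⟨I, e, m, he, hm, hem⟩ := hdi (u ≫ w) ⟨_, u, w, hu, hw, rfl⟩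
  have := hm.mono
  rw [← hem] at hk
  exact ⟨I, e, m, hem, hm, he.isCoker_of_isKer hk.of_comp_mono⟩

theorem IsDiExact.exists_epi_comp_eq_of_kerLENormalClosure (hdi : IsDiExact C) {A K M N : C}
    {x : M ⟶ N} {y : A ⟶ M} {k : K ⟶ M} (hy : IsAntinormalMap y) (hk : IsKer k x)
    (hyx : y ≫ x = 0) (h : KerLENormalClosure x y) : ∃ ε : A ⟶ K, Epi ε ∧ ε ≫ k = y := by
  obtain ⟨I, ε, κ, hε, hκ, rfl⟩ := hdi y hy
  have := hε.epi
  have := hk.mono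
  obtain ⟨W, f, hκf⟩ := hκ.exists_isKer
  obtain ⟨ι, hι⟩ := hk.lift κ (by rw [← cancel_epi ε, comp_zero, ← Category.assoc, hyx])
  obtain ⟨s, hs⟩ := hκf.lift k (h k f hk.w (by rw [Category.assoc, hκf.w, comp_zero]))
  have : IsSplitEpi ι :=
    .mk' ⟨s, by rw [← cancel_mono k, Category.assoc, hι, hs, Category.id_comp]⟩
  exact ⟨ε ≫ ι, inferInstance, by rw [Category.assoc, hι]⟩

theorem IsDiExact.kerLENormalClosure_of_comp_eq (hdi : IsDiExact C) {W Y Q R K M : C}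
    {w : W ⟶ Y} {c : Y ⟶ Q} {p : Q ⟶ R} {e : W ⟶ M} {j : M ⟶ Q} {k : K ⟶ W}
    (hw : IsNormalMonoMap w) (hcp : IsNormalEpiMap (c ≫ p)) (hp : IsNormalEpiMap p)
    (hj : IsNormalMonoMap j) [Epi e] (hej : e ≫ j = w ≫ c) (hk : IsKer k (w ≫ c ≫ p)) :
    KerLENormalClosure (j ≫ p) (k ≫ e) := by
  obtain ⟨I, ε, κ, hεκ, hκ, hε⟩ := hdi.exists_image_factorization hw hcp hk
  obtain ⟨E, η, θ, hη, hθ, hηθ⟩ := hdi (j ≫ p) ⟨_, j, p, hj, hp, rfl⟩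
  have := hθ.mono
  have := hη.epi
  have := hε.epi
  have hejp : e ≫ η ≫ θ = w ≫ c ≫ p := by rw [hηθ, ← Category.assoc, hej, Category.assoc]
  obtain ⟨ψ, hψ⟩ := hε.desc (e ≫ η) (by
    rw [← cancel_mono θ, Category.assoc, Category.assoc, hejp, hk.w, zero_comp])
  have hψθ : ψ ≫ θ = κ := by
    rw [← cancel_epi ε, ← Category.assoc, hψ, Category.assoc, hejp, hεκ]
  -- `ψ` is an epimorphism and, as `ψ ≫ θ = κ` is normal, a normal monomorphism: an isomorphism.
  have : Epi ψ := epi_of_epi_fac hψ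
  obtain ⟨V, f, hκf⟩ := hκ.exists_isKer
  rw [← hψθ] at hκf
  obtain ⟨_⟩ := hκf.left_of_comp.isNormalMonoMap
  have := isIso_of_epi_of_strongMono ψ
  intro P E' t d ht hd
  have htη : t ≫ η = 0 := by rw [← cancel_mono θ, Category.assoc, hηθ, ht, zero_comp]
  obtain ⟨s, hs⟩ := hε.desc (e ≫ d) (by rwa [← Category.assoc])
  have hd : d = η ≫ inv ψ ≫ s := by
    rw [← cancel_epi e, ← Category.assoc, ← hψ, Category.assoc, IsIso.hom_inv_id_assoc, hs]
  rw [hd, ← Category.assoc, htη, zero_comp]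

end DiExact

section ImageFactorization

variable [HasZeroMorphisms C]

/-- For normal subobjects `b : B ↣ Y`, `X`, `V` of `Y`, with `c : Y ↠ Y/V`,
`p : Y/V ↠ Y/(X ∨ V)`, `t₁ = B ∧ X` and `t₂ = B ∧ V`, this says that the image `(B ∨ V)/V`
of `B` meets `(X ∨ V)/V` inside the image of `B ∧ X`. -/
def ExactImageFactorization {B B₁ B₂ Y Q R : C} (b : B ⟶ Y) (c : Y ⟶ Q) (p : Q ⟶ R)
    (t₁ : B₁ ⟶ B) (t₂ : B₂ ⟶ B) : Prop :=
  ∃ (M : C) (e : B ⟶ M) (j : M ⟶ Q), e ≫ j = b ≫ c ∧ IsNormalMonoMap j ∧ IsCoker e t₂ ∧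
    KerLENormalClosure (j ≫ p) (t₁ ≫ e)

variable {B B₁ B₂ Y A₁ A₂ Q R : C} {b : B ⟶ Y} {c : Y ⟶ Q} {p : Q ⟶ R} {t₁ : B₁ ⟶ B}
  {t₂ : B₂ ⟶ B} {a₁ : A₁ ⟶ Y} {a₂ : A₂ ⟶ Y}

/-- In lattice terms: `B ∧ (X ∨ V) ≤ (B ∧ X) ∨ (B ∧ V)`. -/
theorem ExactImageFactorization.kerLEJointClosure {Q' : C} {q : Y ⟶ Q'}
    (h : ExactImageFactorization b c p t₁ t₂) (hcp : IsJointCoker (c ≫ p) a₁ a₂)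
    (hq : IsJointCoker q a₁ a₂) : KerLEJointClosure (b ≫ q) t₁ t₂ := by
  obtain ⟨M, e, j, hej, -, he, hker⟩ := h
  obtain ⟨s, hs⟩ := hq.desc (c ≫ p) hcp.w₁ hcp.w₂
  intro P E t d ht h₁ h₂
  obtain ⟨d, rfl⟩ := he.desc d h₂
  have htejp : (t ≫ e) ≫ j ≫ p = 0 :=
    calc (t ≫ e) ≫ j ≫ p = t ≫ b ≫ c ≫ p := by rw [Category.assoc, reassoc_of% hej]
      _ = (t ≫ b ≫ q) ≫ s := by rw [← hs]; simp only [Category.assoc]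
      _ = 0 := by rw [ht, zero_comp]
  rw [← Category.assoc]
  exact hker _ d htejp (by rwa [Category.assoc])

theorem IsDiExact.exactImageFactorization [HasKernels C] (hdi : IsDiExact C)
    (hb : IsNormalMonoMap b) (hc : IsNormalEpiMap c) (hcp : IsNormalEpiMap (c ≫ p))
    (hp : IsNormalEpiMap p) (ht₂ : IsKer t₂ (b ≫ c))
    (h : KerLEJointClosure (b ≫ c ≫ p) t₁ t₂) : ExactImageFactorization b c p t₁ t₂ := by
  obtain ⟨M, e, j, hej, hj, he⟩ := hdi.exists_image_factorization hb hc ht₂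
  have := he.epi
  refine ⟨M, e, j, hej, hj, he, fun P E t d ht hd => ?_⟩
  refine hdi.kerLENormalClosure_of_comp_eq hb hcp hp hj hej (isKer_kernelι _) t d ht ?_
  rw [Category.assoc]
  exact h _ (e ≫ d) (kernel.condition _) (by rwa [← Category.assoc])
    (by rw [← Category.assoc, he.w, zero_comp])

/-- Exchanges the roles of the two normal subobjects `a₁` and `a₂` of `Y`. -/
theorem ExactImageFactorization.flip [HasKernels C] (hdi : IsDiExact C) {Q₁ R₁ : C}
    {c₁ : Y ⟶ Q₁} {p₁ : Q₁ ⟶ R₁} (hb : IsNormalMonoMap b) (hc₁ : IsCoker c₁ a₁)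
    (hc : IsCoker c a₂) (hp : IsCoker p (a₁ ≫ c)) (hp₁ : IsCoker p₁ (a₂ ≫ c₁))
    (ht₁ : IsKer t₁ (b ≫ c₁)) (h : ExactImageFactorization b c p t₁ t₂) :
    ExactImageFactorization b c₁ p₁ t₂ t₁ :=
  hdi.exactImageFactorization hb hc₁.isNormalEpiMap (hc₁.isNormalEpiMap_comp hp₁)
    hp₁.isNormalEpiMap ht₁
    (h.kerLEJointClosure (hc.isJointCoker_comp hp) (hc₁.isJointCoker_comp hp₁).symm).symm

end ImageFactorization

section Exchange

variable [HasZeroMorphisms C] [HasKernels C] [HasCokernels C]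

/-- Passes from the image `M₁` of `B` in `Z = Y/X` to the image `M₂` of `V`: both conditions
say that `M₁ ∧ M₂` is the image of `B ∧ V`, and this meet is symmetric. -/
theorem ExactImageFactorization.transfer (hdi : IsDiExact C)
    {Y Z B V BV VB B₀ V₀ YV YB : C} {b : B ⟶ Y} {v : V ⟶ Y} {g : Y ⟶ Z} {cV : Y ⟶ YV}
    {cB : Y ⟶ YB} {tbv : BV ⟶ B} {tvb : VB ⟶ V} {tb : B₀ ⟶ B} {tv : V₀ ⟶ V}
    (hv : IsNormalMonoMap v) (hg : IsNormalEpiMap g) (hcV : IsCoker cV v) (hcB : IsCoker cB b)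
    (htbv : IsKer tbv (b ≫ cV)) (htvb : IsKer tvb (v ≫ cB)) (htv : IsKer tv (v ≫ g))
    (h : ExactImageFactorization b g (cokernel.π (v ≫ g)) tbv tb) :
    ExactImageFactorization v g (cokernel.π (b ≫ g)) tvb tv := by
  obtain ⟨M₁, eB, jB, hBej, hjB, heB, hkerB⟩ := h
  obtain ⟨M₂, eV, jV, hVej, hjV, heV⟩ := hdi.exists_image_factorization hv hg htv
  refine ⟨M₂, eV, jV, hVej, hjV, heV, ?_⟩
  have := heB.epi
  have := heV.epi
  have := hjV.mono
  obtain ⟨β, hβ⟩ := (hv.isKer_of_isCoker hcV).lift (tbv ≫ b) (by rw [Category.assoc, htbv.w])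
  obtain ⟨α, rfl⟩ := htvb.lift β (by rw [← Category.assoc, hβ, Category.assoc, hcB.w, comp_zero])
  have hBV : (tbv ≫ eB) ≫ jB = α ≫ tvb ≫ eV ≫ jV := by
    rw [Category.assoc, hBej, hVej, ← Category.assoc tbv, ← hβ]
    simp only [Category.assoc]
  have hjBker : IsKer jB (cokernel.π (b ≫ g)) := by
    refine hjB.isKer_of_isCoker (IsCoker.of_epi_comp (e := eB) ?_)
    rw [hBej]
    exact isCoker_cokernelπ _
  have hjVker : IsKer jV (cokernel.π (v ≫ g)) := by
    refine hjV.isKer_of_isCoker (IsCoker.of_epi_comp (e := eV) ?_)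
    rw [hVej]
    exact isCoker_cokernelπ _
  obtain ⟨i, hi⟩ := exists_iso_kernel_comp_eq hjBker hjVker (isKer_kernelι _) (isKer_kernelι _)
  obtain ⟨ε, hε, hεk⟩ := hdi.exists_epi_comp_eq_of_kerLENormalClosure
    ⟨_, tbv, eB, htbv.isNormalMonoMap, heB.isNormalEpiMap, rfl⟩ (isKer_kernelι _)
    (by rw [← Category.assoc, hBV]; simp [hjVker.w]) hkerB
  refine kerLENormalClosure_of_epi_comp_eq (isKer_kernelι _) (ε := ε ≫ i.hom) (α := α) ?_
  rw [← cancel_mono jV]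
  simp only [Category.assoc, hi]
  rw [← Category.assoc ε, hεk, hBV]

theorem ExactImageFactorization.swap (hdi : IsDiExact C)
    {X Y Z B V B₀ V₀ BV VB YV YB RV RB : C} {x : X ⟶ Y} {g : Y ⟶ Z} {b : B ⟶ Y} {v : V ⟶ Y}
    {cV : Y ⟶ YV} {cB : Y ⟶ YB} {pV : YV ⟶ RV} {pB : YB ⟶ RB} {tb : B₀ ⟶ B} {tv : V₀ ⟶ V}
    {tbv : BV ⟶ B} {tvb : VB ⟶ V} (hb : IsNormalMonoMap b) (hv : IsNormalMonoMap v)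
    (hg : IsCoker g x) (hcV : IsCoker cV v) (hcB : IsCoker cB b) (hpV : IsCoker pV (x ≫ cV))
    (hpB : IsCoker pB (x ≫ cB)) (htb : IsKer tb (b ≫ g)) (htv : IsKer tv (v ≫ g))
    (htbv : IsKer tbv (b ≫ cV)) (htvb : IsKer tvb (v ≫ cB))
    (h : ExactImageFactorization b cV pV tb tbv) : ExactImageFactorization v cB pB tv tvb :=
  ((h.flip hdi hb hg hcV hpV (isCoker_cokernelπ _) htb).transfer hdi hv hg.isNormalEpiMap hcV
    hcB htbv htvb htv).flip hdi hv hcB hg (isCoker_cokernelπ _) hpB htvb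

end Exchange

namespace SES

section ZeroMorphisms

variable [HasZeroMorphisms C]

theorem isKer_f (S : SES C) : IsKer S.f S.g := .of_isLimit S.isKernel.some

theorem isCoker_g (S : SES C) : IsCoker S.g S.f := .of_isColimit S.isCokernel.some

@[simp] theorem comp_b {S T R : SES C} (φ : S ⟶ T) (ψ : T ⟶ R) : (φ ≫ ψ).b = φ.b ≫ ψ.b := rfl

@[simp] theorem id_b (S : SES C) : (𝟙 S : S ⟶ S).b = 𝟙 S.Y := rfl

@[simp] theorem zero_b {S T : SES C} : (0 : S ⟶ T).b = 0 := rfl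

theorem hom_ext {S T : SES C} {φ ψ : S ⟶ T} (h : φ.b = ψ.b) : φ = ψ := by
  have := T.isKer_f.mono
  have := S.isCoker_g.epi
  refine Hom.ext ?_ h ?_
  · rw [← cancel_mono T.f, ← φ.comm₁, ← ψ.comm₁, h]
  · rw [← cancel_epi S.g, φ.comm₂, ψ.comm₂, h]

noncomputable def homMk {S T : SES C} (b : S.Y ⟶ T.Y) (hb : S.f ≫ b ≫ T.g = 0) : S ⟶ T :=
  have ha := T.isKer_f.lift (S.f ≫ b) (by rwa [Category.assoc])
  have hc := S.isCoker_g.desc (b ≫ T.g) hb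
  ⟨ha.choose, b, hc.choose, ha.choose_spec.symm, hc.choose_spec⟩

@[simp] theorem homMk_b {S T : SES C} (b : S.Y ⟶ T.Y) (hb : S.f ≫ b ≫ T.g = 0) :
    (homMk b hb).b = b := rfl

def left : SES C ⥤ C where
  obj S := S.X
  map φ := φ.a

def middle : SES C ⥤ C where
  obj S := S.Y
  map φ := φ.b

def right : SES C ⥤ C where
  obj S := S.Z
  map φ := φ.c

theorem isKer_of_isKer_b {K S T : SES C} {k : K ⟶ S} {ψ : S ⟶ T} (hb : IsKer k.b ψ.b)
    (hf : IsKer K.f (k.b ≫ S.g)) : IsKer k ψ := by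
  have := hb.mono
  refine ⟨hom_ext (by simpa using hb.w), ⟨fun u u' h => hom_ext ?_⟩, fun R ρ hρ => ?_⟩
  · rw [← cancel_mono k.b]
    simpa using congrArg Hom.b h
  · obtain ⟨s, hs⟩ := hb.lift ρ.b (by simpa using congrArg Hom.b hρ)
    obtain ⟨l, hl⟩ := hf.lift (R.f ≫ s) (by
      rw [Category.assoc, reassoc_of% hs, reassoc_of% ρ.comm₁, S.w, comp_zero])
    have hs' : R.f ≫ s ≫ K.g = 0 := by rw [← reassoc_of% hl, K.w, comp_zero]
    exact ⟨homMk s hs', hom_ext (by simpa using hs)⟩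

theorem isCoker_of_isCoker_b {S T Q : SES C} {χ : S ⟶ T} {q : T ⟶ Q} (hb : IsCoker q.b χ.b)
    (hg : IsCoker Q.g (T.f ≫ q.b)) : IsCoker q χ := by
  have := hb.epi
  refine ⟨hom_ext (by simpa using hb.w), ⟨fun u u' h => hom_ext ?_⟩, fun R ρ hρ => ?_⟩
  · rw [← cancel_epi q.b]
    simpa using congrArg Hom.b h
  · obtain ⟨s, hs⟩ := hb.desc ρ.b (by simpa using congrArg Hom.b hρ)
    obtain ⟨l, hl⟩ := hg.desc (s ≫ R.g) (by
      rw [Category.assoc, reassoc_of% hs, reassoc_of% ρ.comm₁, R.w, comp_zero])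
    have hs' : Q.f ≫ s ≫ R.g = 0 := by rw [← hl, reassoc_of% Q.w, zero_comp]
    exact ⟨homMk s hs', hom_ext (by simpa using hs)⟩

end ZeroMorphisms

variable [HasZeroMorphisms C] [HasKernels C] [HasCokernels C]

noncomputable abbrev ofKernel {A B : C} (φ : A ⟶ B) : SES C where
  X := kernel φ
  Y := A
  Z := cokernel (kernel.ι φ)
  f := kernel.ι φ
  g := cokernel.π (kernel.ι φ)
  w := cokernel.condition _
  isKernel :=
    ⟨((isKer_kernelι φ).isNormalMonoMap.isKer_of_isCoker (isCoker_cokernelπ _)).isLimit⟩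
  isCokernel := ⟨(isCoker_cokernelπ _).isColimit⟩

noncomputable abbrev ofCokernel {A B : C} (φ : A ⟶ B) : SES C where
  X := kernel (cokernel.π φ)
  Y := B
  Z := cokernel φ
  f := kernel.ι (cokernel.π φ)
  g := cokernel.π φ
  w := kernel.condition _
  isKernel := ⟨(isKer_kernelι _).isLimit⟩
  isCokernel :=
    ⟨((isCoker_cokernelπ φ).isNormalEpiMap.isCoker_of_isKer (isKer_kernelι _)).isColimit⟩

noncomputable abbrev kernelι {S T : SES C} (ψ : S ⟶ T) : ofKernel (kernel.ι ψ.b ≫ S.g) ⟶ S :=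
  homMk (kernel.ι ψ.b) (kernel.condition _)

noncomputable abbrev cokernelπ {S T : SES C} (χ : S ⟶ T) :
    T ⟶ ofCokernel (T.f ≫ cokernel.π χ.b) :=
  homMk (cokernel.π χ.b) ((Category.assoc _ _ _).symm.trans (cokernel.condition _))

theorem isKer_b_of_isKer {K S T : SES C} {k : K ⟶ S} {ψ : S ⟶ T} (h : IsKer k ψ) :
    IsKer k.b ψ.b ∧ IsKer K.f (k.b ≫ S.g) := by
  obtain ⟨i, hi⟩ := h.exists_iso
    (isKer_of_isKer_b (k := kernelι ψ) (isKer_kernelι _) (isKer_kernelι _))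
  have hb : k.b = i.hom.b ≫ kernel.ι ψ.b := by rw [← hi]; rfl
  have hf : K.f = i.hom.a ≫ (ofKernel (kernel.ι ψ.b ≫ S.g)).f ≫ i.inv.b := by
    rw [← Category.assoc, ← i.hom.comm₁, Category.assoc, ← comp_b, i.hom_inv_id, id_b,
      Category.comp_id]
  refine ⟨hb ▸ (isKer_kernelι _).iso_comp (middle.mapIso i), ?_⟩
  have := ((isKer_kernelι _).comp_iso (middle.mapIso i).symm).iso_comp (left.mapIso i)
  rw [hf, hb, Category.assoc]
  exact this

theorem isCoker_b_of_isCoker {S T Q : SES C} {χ : S ⟶ T} {q : T ⟶ Q} (h : IsCoker q χ) :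
    IsCoker q.b χ.b ∧ IsCoker Q.g (T.f ≫ q.b) := by
  obtain ⟨i, hi⟩ := (isCoker_of_isCoker_b (q := cokernelπ χ) (isCoker_cokernelπ _)
    (isCoker_cokernelπ _)).exists_iso h
  have hb : q.b = cokernel.π χ.b ≫ i.hom.b := by rw [← hi]; rfl
  have hg : Q.g = i.inv.b ≫ (ofCokernel (T.f ≫ cokernel.π χ.b)).g ≫ i.hom.c := by
    rw [i.hom.comm₂, ← Category.assoc, ← comp_b, i.inv_hom_id, id_b, Category.id_comp]
  refine ⟨hb ▸ (isCoker_cokernelπ _).comp_iso (middle.mapIso i), ?_⟩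
  have := ((isCoker_cokernelπ _).iso_comp (middle.mapIso i).symm).comp_iso (right.mapIso i)
  rw [hg, hb, ← Category.assoc, ← Category.assoc T.f]
  exact this

theorem isNormalMonoMap_iff {K S : SES C} (m : K ⟶ S) :
    IsNormalMonoMap m ↔ IsNormalMonoMap m.b ∧ IsKer K.f (m.b ≫ S.g) := by
  refine ⟨fun hm => ?_, fun ⟨hb, hf⟩ => ?_⟩
  · obtain ⟨_, _, h⟩ := hm.exists_isKer
    obtain ⟨hb, hf⟩ := isKer_b_of_isKer h
    exact ⟨hb.isNormalMonoMap, hf⟩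
  · exact (isKer_of_isKer_b (ψ := cokernelπ m)
      (hb.isKer_of_isCoker (isCoker_cokernelπ _)) hf).isNormalMonoMap

theorem isNormalEpiMap_iff {T Q : SES C} (q : T ⟶ Q) :
    IsNormalEpiMap q ↔ IsNormalEpiMap q.b ∧ IsCoker Q.g (T.f ≫ q.b) := by
  refine ⟨fun hq => ?_, fun ⟨hb, hg⟩ => ?_⟩
  · obtain ⟨_, _, h⟩ := hq.exists_isCoker
    obtain ⟨hb, hg⟩ := isCoker_b_of_isCoker h
    exact ⟨hb.isNormalEpiMap, hg⟩
  · exact (isCoker_of_isCoker_b (χ := kernelι q)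
      (hb.isCoker_of_isKer (isKer_kernelι _)) hg).isNormalEpiMap

theorem isNormalMap_iff {U Q : SES C} (φ : U ⟶ Q) :
    IsNormalMap φ ↔ ∃ (M : C) (e : U.Y ⟶ M) (j : M ⟶ Q.Y), e ≫ j = φ.b ∧
      IsNormalEpiMap e ∧ IsNormalMonoMap j ∧ KerLENormalClosure (j ≫ Q.g) (U.f ≫ e) := by
  constructor
  · rintro ⟨I, e, j, he, hj, rfl⟩
    obtain ⟨heb, hg⟩ := (isNormalEpiMap_iff e).1 he
    obtain ⟨hjb, hf⟩ := (isNormalMonoMap_iff j).1 hj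
    refine ⟨I.Y, e.b, j.b, rfl, heb, hjb, fun P E t d ht hd => ?_⟩
    obtain ⟨s, rfl⟩ := hf.lift t ht
    obtain ⟨d, rfl⟩ := hg.desc d hd
    rw [Category.assoc, reassoc_of% I.w, zero_comp, comp_zero]
  · rintro ⟨M, e, j, hej, he, hj, hker⟩
    have hUe : (U.f ≫ e) ≫ j ≫ Q.g = 0 := by
      rw [Category.assoc, reassoc_of% hej, reassoc_of% φ.comm₁, Q.w, comp_zero]
    obtain ⟨l, hl⟩ := (isKer_kernelι (j ≫ Q.g)).lift (U.f ≫ e) hUe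
    let E : U ⟶ ofKernel (j ≫ Q.g) :=
      homMk e (by rw [← reassoc_of% hl, cokernel.condition, comp_zero])
    let J : ofKernel (j ≫ Q.g) ⟶ Q := homMk j (kernel.condition _)
    have hE : IsCoker (cokernel.π (kernel.ι (j ≫ Q.g))) (U.f ≫ e) :=
      ⟨by rw [← hl, Category.assoc, cokernel.condition, comp_zero], inferInstance,
        fun _ t ht => (isCoker_cokernelπ _).desc t (hker _ t (kernel.condition _) ht)⟩
    exact ⟨_, E, J, (isNormalEpiMap_iff E).2 ⟨he, hE⟩,
      (isNormalMonoMap_iff J).2 ⟨hj, isKer_kernelι _⟩, hom_ext hej⟩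

theorem isNormalMap_comp_of_isNormalMap_comp (hdi : IsDiExact C) {S T U QU QT : SES C}
    {m : T ⟶ S} {μ : U ⟶ S} {cU : S ⟶ QU} {cT : S ⟶ QT} (hm : IsNormalMonoMap m) (hμ : IsNormalMonoMap μ)
    (hcU : IsCoker cU μ) (hcT : IsCoker cT m) (h : IsNormalMap (m ≫ cU)) :
    IsNormalMap (μ ≫ cT) := by
  obtain ⟨hb, hTf⟩ := (isNormalMonoMap_iff m).1 hm
  obtain ⟨hv, hUf⟩ := (isNormalMonoMap_iff μ).1 hμ
  obtain ⟨hcV, hpV⟩ := isCoker_b_of_isCoker hcU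
  obtain ⟨hcB, hpB⟩ := isCoker_b_of_isCoker hcT
  obtain ⟨M, e, j, hej, he, hj, hker⟩ := (isNormalMap_iff (m ≫ cU)).1 h
  have := hj.mono
  have hk : IsKer (kernel.ι (m.b ≫ cU.b)) (e ≫ j) := by rw [hej]; exact isKer_kernelι _
  have hfac : ExactImageFactorization m.b cU.b QU.g T.f (kernel.ι (m.b ≫ cU.b)) :=
    ⟨M, e, j, hej, hj, he.isCoker_of_isKer hk.of_comp_mono, hker⟩
  obtain ⟨M', e', j', hej', hj', he', hker'⟩ := hfac.swap hdi hb hv S.isCoker_g hcV hcB hpV hpB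
    hTf hUf (isKer_kernelι _) (isKer_kernelι _)
  exact (isNormalMap_iff (μ ≫ cT)).2 ⟨M', e', j', hej', he'.isNormalEpiMap, hj', hker'⟩

end SES

theorem stmt16_general {C : Type u} [Category.{v} C] [HasZeroMorphisms C]
    [HasKernels C] [HasCokernels C] (hdi : IsDiExact C) :
    ∀ (S T U : SES C) (m : T ⟶ S) (μ : U ⟶ S),
      IsNormalMonoMap m → IsNormalMonoMap μ →
      ∀ (QU QT : SES C) (cU : S ⟶ QU) (wU : μ ≫ cU = 0)
        (_ : IsColimit (CokernelCofork.ofπ cU wU))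
        (cT : S ⟶ QT) (wT : m ≫ cT = 0)
        (_ : IsColimit (CokernelCofork.ofπ cT wT)),
        (IsNormalMap (m ≫ cU) ↔ IsNormalMap (μ ≫ cT)) := by
  intro S T U m μ hm hμ QU QT cU wU hU cT wT hT
  exact ⟨SES.isNormalMap_comp_of_isNormalMap_comp hdi hm hμ (.of_isColimit hU)
      (.of_isColimit hT),
    SES.isNormalMap_comp_of_isNormalMap_comp hdi hμ hm (.of_isColimit hT) (.of_isColimit hU)⟩

/-- If `C` is a di-exact z-exact category, then dinversion preserves
normal maps in the category `SES C` of short exact sequences of `C`: for every object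
`S` of `SES C`, all normal monomorphisms `m : T ↣ S` and `μ : U ↣ S`, and arbitrary
chosen cokernels `cU : S ↠ S/U` of `μ` and `cT : S ↠ S/T` of `m`, the composite
`m ≫ cU : T ⟶ S/U` is a normal morphism if and only if the composite
`μ ≫ cT : U ⟶ S/T` is a normal morphism. -/
theorem stmt16 {C : Type u} [Category.{v} C] [HasZeroObject C] [HasZeroMorphisms C]
    [HasKernels C] [HasCokernels C] (hdi : IsDiExact C) :
    ∀ (S T U : SES C) (m : T ⟶ S) (μ : U ⟶ S),
      IsNormalMonoMap m → IsNormalMonoMap μ →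
      ∀ (QU QT : SES C) (cU : S ⟶ QU) (wU : μ ≫ cU = 0)
        (_ : IsColimit (CokernelCofork.ofπ cU wU))
        (cT : S ⟶ QT) (wT : m ≫ cT = 0)
        (_ : IsColimit (CokernelCofork.ofπ cT wT)),
        (IsNormalMap (m ≫ cU) ↔ IsNormalMap (μ ≫ cT)) :=
  stmt16_general hdi
end

section
/- Let X be a pointed regular category admitting all cokernels (hence z-exact). Then the following are equivalent: (i) X is homologically self-dual; (ii) every pullback in X of a normal epimorphism along a normal monomorphism is a normal epimorphism. -/
open CategoryTheory CategoryTheory.Limits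

universe v u

variable {C : Type u} [Category.{v} C]

/-!
Suppose `C` is homologically self-dual. Take a pullback `P` of a normal epimorphism `e : A ⟶ D`
along a normal monomorphism `m : B ⟶ D`. Then `ker e` is also the kernel of `P ⟶ B`, and
`ker e ↣ P ↣ A` is totally normal. So `P / ker e ⟶ D` is a monomorphism, and hence so is the
comparison map `P / ker e ⟶ B`. Since `C` is regular, `P ⟶ B` is a regular epimorphism, hence a
strong one. The comparison map is therefore an isomorphism.

Conversely, let `X ↣ Y ↣ Z` be totally normal. The induced map `Y/X ⟶ Z/X` factors through the
kernel `K` of `Z/X ⟶ Z/Y`, and `Y` is the pullback of `K ↣ Z/X` along `Z ⟶ Z/X`. By hypothesis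
`Y ⟶ K` is a normal epimorphism. Its kernel is `X`, so `Y/X ≅ K`.
-/

namespace CategoryTheory

variable [HasZeroMorphisms C]

noncomputable def NormalEpi.isColimitCokernelCofork {N A D : C} {e : A ⟶ D} (he : NormalEpi e)
    {n : N ⟶ A} (w : n ≫ e = 0) (hn : IsLimit (KernelFork.ofι n w)) :
    IsColimit (CokernelCofork.ofπ e w) :=
  have : Epi e := he.regularEpi.epi
  CokernelCofork.IsColimit.ofπ' e w fun t ht =>
    let ⟨l, (hl : l ≫ n = he.g)⟩ := KernelFork.IsLimit.lift' hn he.g he.w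
    CokernelCofork.IsColimit.desc' he.isColimit t (by rw [← hl, Category.assoc, ht, comp_zero])

noncomputable def NormalMono.isLimitKernelFork {B D R : C} {m : B ⟶ D} (hm : NormalMono m)
    {r : D ⟶ R} (w : m ≫ r = 0) (hr : IsColimit (CokernelCofork.ofπ r w)) :
    IsLimit (KernelFork.ofι m w) :=
  have : Mono m := hm.regularMono.mono
  KernelFork.IsLimit.ofι' m w fun t ht =>
    let ⟨d, (hd : r ≫ d = hm.g)⟩ := CokernelCofork.IsColimit.desc' hr hm.g hm.w
    KernelFork.IsLimit.lift' hm.isLimit t (by rw [← hd, ← Category.assoc, ht, zero_comp])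

noncomputable def IsPullback.isLimitKernelForkSnd {P A B D K : C} {p₁ : P ⟶ A} {p₂ : P ⟶ B}
    {e : A ⟶ D} {m : B ⟶ D} (hpb : IsPullback p₁ p₂ e m) {ι : K ⟶ A} (w : ι ≫ e = 0)
    (hι : IsLimit (KernelFork.ofι ι w)) {j : K ⟶ P} (hj₁ : j ≫ p₁ = ι) (hj₂ : j ≫ p₂ = 0) :
    IsLimit (KernelFork.ofι j hj₂) :=
  have : Mono ι := mono_of_isLimit_fork hι
  have : Mono j := mono_of_mono_fac hj₁
  KernelFork.IsLimit.ofι' j hj₂ fun t ht =>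
    let ⟨l, (hl : l ≫ ι = t ≫ p₁)⟩ := KernelFork.IsLimit.lift' hι (t ≫ p₁)
      (by rw [Category.assoc, hpb.w, ← Category.assoc, ht, zero_comp])
    ⟨l, hpb.hom_ext (by rw [Category.assoc, hj₁, hl]) (by rw [Category.assoc, hj₂, comp_zero, ht])⟩

theorem IsPullback.of_isLimitKernelFork_comp {Y Z Q K R : C} {g : Y ⟶ Z} {y : Y ⟶ K}
    {q : Z ⟶ Q} {k : K ⟶ Q} {s : Q ⟶ R} (wk : k ≫ s = 0) (hk : IsLimit (KernelFork.ofι k wk))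
    (wg : g ≫ q ≫ s = 0) (hg : IsLimit (KernelFork.ofι g wg)) (comm : g ≫ q = y ≫ k) :
    IsPullback g y q k := by
  have : Mono k := mono_of_isLimit_fork hk
  have : Mono g := mono_of_isLimit_fork hg
  let lift (c : PullbackCone q k) := KernelFork.IsLimit.lift' hg c.fst
    (by rw [← Category.assoc, c.condition, Category.assoc, wk, comp_zero])
  have lift_fac (c : PullbackCone q k) : (lift c).1 ≫ g = c.fst := (lift c).2
  refine ⟨⟨comm⟩, ⟨PullbackCone.IsLimit.mk comm (fun c => (lift c).1) lift_fac
    (fun c => ?_) (fun c l hl _ => ?_)⟩⟩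
  · rw [← cancel_mono k, Category.assoc, ← comm, ← Category.assoc, lift_fac, c.condition]
  · rw [← cancel_mono g, hl, lift_fac]

noncomputable def isColimitCokernelCoforkOfStrongEpi {K P B : C}
    {j : K ⟶ P} [HasCokernel j] {p : P ⟶ B} [StrongEpi p] (w : j ≫ p = 0)
    [Mono (cokernel.desc j p w)] : IsColimit (CokernelCofork.ofπ p w) :=
  have : StrongEpi (cokernel.π j ≫ cokernel.desc j p w) := by
    rwa [cokernel.π_desc]
  have : StrongEpi (cokernel.desc j p w) := strongEpi_of_strongEpi (cokernel.π j) _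
  have : IsIso (cokernel.desc j p w) := isIso_of_mono_of_strongEpi _
  IsCokernel.cokernelIso j p (cokernelIsCokernel j) (asIso (cokernel.desc j p w))
    (cokernel.π_desc j p w)

end CategoryTheory

section SelfDuality

variable [HasZeroMorphisms C] [HasKernels C] [HasCokernels C]

theorem IsHomologicallySelfDual.isNormalEpiMap_of_isPullback (hC : IsHomologicallySelfDual C)
    {P A B D : C} {p₁ : P ⟶ A} {p₂ : P ⟶ B} {e : A ⟶ D} {m : B ⟶ D} (he : IsNormalEpiMap e)
    (hm : IsNormalMonoMap m) (hpb : IsPullback p₁ p₂ e m) [StrongEpi p₂] :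
    IsNormalEpiMap p₂ := by
  obtain ⟨he⟩ := he
  have : NormalMono m := hm.some
  have h0 : kernel.ι e ≫ e = (0 : kernel e ⟶ B) ≫ m := by simp
  set j := hpb.lift (kernel.ι e) 0 h0
  have hj₁ : j ≫ p₁ = kernel.ι e := hpb.lift_fst _ _ h0
  have hj₂ : j ≫ p₂ = 0 := hpb.lift_snd _ _ h0
  have hj : IsLimit (KernelFork.ofι j hj₂) :=
    hpb.isLimitKernelForkSnd (kernel.condition e) (kernelIsKernel e) hj₁ hj₂
  have wjp : (j ≫ p₁) ≫ e = 0 := by rw [hj₁, kernel.condition]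
  have hjp : IsLimit (KernelFork.ofι (j ≫ p₁) wjp) :=
    IsKernel.isoKernel e (j ≫ p₁) (kernelIsKernel e) (Iso.refl _) (by simp [hj₁])
  have hp₁ : NormalMono p₁ := normalOfIsPullbackFstOfNormal hpb.w hpb.isLimit
  have wu : j ≫ p₁ ≫ e = 0 := by rw [← Category.assoc, wjp]
  obtain ⟨hu⟩ := hC j p₁ ⟨⟨B, p₂, hj₂, hj⟩⟩ ⟨hp₁⟩ ⟨⟨D, e, wjp, hjp⟩⟩ (cokernel.π j)
    (cokernel.condition j) (cokernelIsCokernel j) e wjp (he.isColimitCokernelCofork wjp hjp)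
    (cokernel.desc j (p₁ ≫ e) wu) (cokernel.π_desc j (p₁ ≫ e) wu)
  have hvm : cokernel.desc j p₂ hj₂ ≫ m = cokernel.desc j (p₁ ≫ e) wu := by
    ext; simp [hpb.w]
  have : Mono (cokernel.desc j (p₁ ≫ e) wu) := hu.regularMono.mono
  have : Mono (cokernel.desc j p₂ hj₂) := mono_of_mono_fac hvm
  exact ⟨⟨_, j, hj₂, isColimitCokernelCoforkOfStrongEpi hj₂⟩⟩

theorem isHomologicallySelfDual_of_isNormalEpiMap_of_isPullback
    (hC : ∀ {P A B D : C} (p₁ : P ⟶ A) (p₂ : P ⟶ B) (e : A ⟶ D) (m : B ⟶ D),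
      IsNormalEpiMap e → IsNormalMonoMap m → IsPullback p₁ p₂ e m → IsNormalEpiMap p₂) :
    IsHomologicallySelfDual C := by
  intro X Y Z QY QZ f g _ hg hfg p wp hp q wq hq u hu
  obtain ⟨hg⟩ := hg
  obtain ⟨hfg⟩ := hfg
  have : Epi p := epi_of_isColimit_cofork hp
  obtain ⟨s, hs : q ≫ s = cokernel.π g⟩ :=
    CokernelCofork.IsColimit.desc' hq (cokernel.π g) (by simp)
  have hus : u ≫ s = 0 := by
    rw [← cancel_epi p, ← Category.assoc, hu, Category.assoc, hs, cokernel.condition, comp_zero]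
  set ubar := kernel.lift s u hus
  have wg : g ≫ q ≫ s = 0 := by rw [hs, cokernel.condition]
  have hgker : IsLimit (KernelFork.ofι g wg) :=
    KernelFork.isLimitOfIsLimitOfIff'
      (hg.isLimitKernelFork (cokernel.condition g) (cokernelIsCokernel g)) (q ≫ s) (by simp [hs])
  have hsq : IsPullback g (p ≫ ubar) q (kernel.ι s) :=
    IsPullback.of_isLimitKernelFork_comp (kernel.condition s) (kernelIsKernel s) wg hgker
      (by simp [ubar, hu])
  obtain ⟨hpu⟩ := hC g (p ≫ ubar) q (kernel.ι s) ⟨⟨X, f ≫ g, wq, hq⟩⟩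
    ⟨⟨_, s, kernel.condition s, kernelIsKernel s⟩⟩ hsq
  have wf : f ≫ p ≫ ubar = 0 := by rw [← Category.assoc, wp, zero_comp]
  have hf : IsLimit (KernelFork.ofι f wf) :=
    hsq.isLimitKernelForkSnd wq (hfg.isLimitKernelFork wq hq) rfl wf
  let φ : CokernelCofork.ofπ p wp ⟶ CokernelCofork.ofπ (p ≫ ubar) wf := Cofork.mkHom ubar rfl
  have : IsIso φ := IsColimit.hom_isIso hp (hpu.isColimitCokernelCofork wf hf) φ
  have : IsIso ubar := (Cocone.forget _).map_isIso φ
  exact ⟨⟨_, s, hus,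
    IsKernel.isoKernel s u (kernelIsKernel s) (asIso ubar) (kernel.lift_ι s u hus)⟩⟩

end SelfDuality

theorem stmt18_general {C : Type u} [Category.{v} C] [HasZeroMorphisms C]
    [HasFiniteLimits C] [HasCokernels C]
    (hstab : ∀ {P A B D : C} (p₁ : P ⟶ A) (p₂ : P ⟶ B) (e : A ⟶ D) (g : B ⟶ D),
      IsPullback p₁ p₂ e g → Nonempty (RegularEpi e) → Nonempty (RegularEpi p₂)) :
    IsHomologicallySelfDual C ↔
      ∀ {P A B D : C} (p₁ : P ⟶ A) (p₂ : P ⟶ B) (e : A ⟶ D) (m : B ⟶ D),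
        IsNormalEpiMap e → IsNormalMonoMap m → IsPullback p₁ p₂ e m →
        IsNormalEpiMap p₂ := by
  refine ⟨fun hC P A B D p₁ p₂ e m he hm hpb => ?_,
    isHomologicallySelfDual_of_isNormalEpiMap_of_isPullback⟩
  have : IsRegularEpi p₂ := ⟨hstab p₁ p₂ e m hpb ⟨he.some.regularEpi⟩⟩
  exact hC.isNormalEpiMap_of_isPullback he hm hpb

/-- Let `C` be a pointed regular category admitting all cokernels
(hence z-exact): `C` has all finite limits, every kernel pair has a coequalizer, and
regular epimorphisms are stable under pullback.  Then the following are equivalent: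
(i) `C` is homologically self-dual;
(ii) every pullback of a normal epimorphism along a normal monomorphism is a normal
epimorphism. -/
theorem stmt18 {C : Type u} [Category.{v} C] [HasZeroObject C] [HasZeroMorphisms C]
    [HasFiniteLimits C] [HasCokernels C]
    (hcoeq : ∀ {A B : C} (f : A ⟶ B),
      HasCoequalizer (pullback.fst f f) (pullback.snd f f))
    (hstab : ∀ {P A B D : C} (p₁ : P ⟶ A) (p₂ : P ⟶ B) (e : A ⟶ D) (g : B ⟶ D),
      IsPullback p₁ p₂ e g → Nonempty (RegularEpi e) → Nonempty (RegularEpi p₂)) :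
    IsHomologicallySelfDual C ↔
      ∀ {P A B D : C} (p₁ : P ⟶ A) (p₂ : P ⟶ B) (e : A ⟶ D) (m : B ⟶ D),
        IsNormalEpiMap e → IsNormalMonoMap m → IsPullback p₁ p₂ e m →
        IsNormalEpiMap p₂ :=
  stmt18_general hstab
end
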